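/- arXiv:2001.08468 — 4 statements merged into one kernel-verified Lean document; each statement's English description precedes it below -/
import Mathlib

section
/- Every SMI instance admits at most one SSNM; i.e., if M and M' are both strongly stable noncrossing matchings of the same SMI instance, then M = M'. -/
open scoped Classical

/-- An SMTI instance: men of type `Mty`, women of type `Wty`.
`mpref m w = some r` means `w` appears on `m`'s preference list with rank `r`
(smaller rank = more preferred; equal ranks = tied); `none` means `w` is not on `m`'s list.
Similarly for `wpref`.  A pair is acceptable when each lists the other. -/
structure SMTI (Mty : Type) (Wty : Type) where
  mpref : Mty → Wty → Option ℕ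
  wpref : Wty → Mty → Option ℕ

namespace SMTI

variable {Mty Wty : Type}

/-- Rank of an optional preference-list entry: `⊤` for an absent entry
(so that being single / unacceptable is worse than any listed partner). -/
def rk (o : Option ℕ) : ℕ∞ := o.elim ⊤ (fun r => (r : ℕ∞))

/-- `(m, w)` is an acceptable pair. -/
def Acc (I : SMTI Mty Wty) (m : Mty) (w : Wty) : Prop :=
  (I.mpref m w).isSome ∧ (I.wpref w m).isSome

/-- `M` is a matching: a set of acceptable pairs in which each person appears at most once. -/
def IsMatching (I : SMTI Mty Wty) (M : Finset (Mty × Wty)) : Prop :=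
  (∀ p ∈ M, I.Acc p.1 p.2) ∧
  (∀ p ∈ M, ∀ q ∈ M, (p.1 = q.1 ∨ p.2 = q.2) → p = q)

/-- Two pairs cross iff one pair's man is above the other pair's man
while its woman is below the other pair's woman. -/
def Crossing [Preorder Mty] [Preorder Wty] (p q : Mty × Wty) : Prop :=
  (p.1 < q.1 ∧ q.2 < p.2) ∨ (q.1 < p.1 ∧ p.2 < q.2)

/-- A set of pairs is noncrossing if no two of its pairs cross. -/
def Noncrossing [Preorder Mty] [Preorder Wty] (M : Finset (Mty × Wty)) : Prop :=
  ∀ p ∈ M, ∀ q ∈ M, ¬ Crossing p q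

/-- `(m, w)` is a (weak) blocking pair for `M`: an acceptable pair not in `M`
such that `m` strictly prefers `w` to his partner in `M` (or is single) and
`w` strictly prefers `m` to her partner in `M` (or is single). -/
def Blocks (I : SMTI Mty Wty) (M : Finset (Mty × Wty)) (m : Mty) (w : Wty) : Prop :=
  I.Acc m w ∧ (m, w) ∉ M ∧
  (∀ w', (m, w') ∈ M → rk (I.mpref m w) < rk (I.mpref m w')) ∧
  (∀ m', (m', w) ∈ M → rk (I.wpref w m) < rk (I.wpref w m'))

/-- A noncrossing (weak) blocking pair: a blocking pair crossing no pair of `M`. -/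
def NCBlocks [Preorder Mty] [Preorder Wty] (I : SMTI Mty Wty) (M : Finset (Mty × Wty))
    (m : Mty) (w : Wty) : Prop :=
  I.Blocks M m w ∧ ∀ q ∈ M, ¬ Crossing (m, w) q

/-- A strongly stable noncrossing matching (for SMTI in the weak-stability sense:
a weak-SSNM): a noncrossing matching admitting no (weak) blocking pair at all. -/
def IsSSNM [Preorder Mty] [Preorder Wty] (I : SMTI Mty Wty) (M : Finset (Mty × Wty)) : Prop :=
  I.IsMatching M ∧ Noncrossing M ∧ ∀ m w, ¬ I.Blocks M m w

/-- A weakly stable noncrossing matching: a noncrossing matching admitting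
no noncrossing (weak) blocking pair. -/
def IsWSNM [Preorder Mty] [Preorder Wty] (I : SMTI Mty Wty) (M : Finset (Mty × Wty)) : Prop :=
  I.IsMatching M ∧ Noncrossing M ∧ ∀ m w, ¬ I.NCBlocks M m w

/-- The instance has strict preference lists (no ties), i.e. it is an SMI instance. -/
def NoTies (I : SMTI Mty Wty) : Prop :=
  (∀ m w w', (I.mpref m w).isSome → I.mpref m w = I.mpref m w' → w = w') ∧
  (∀ w m m', (I.wpref w m).isSome → I.wpref w m = I.wpref w m' → m = m')

end SMTI

/-!
Both matchings are stable. If a woman `w` prefers her `M'`-partner `m` to her lot in `M`, then,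
as `(m, w)` does not block `M`, the man `m` prefers his `M`-partner `w₁` to `w`; as `(m, w₁)` does
not block `M'`, the woman `w₁` prefers her `M'`-partner `m₁` to `m`. This is the same situation
one link further along, and since neither `M` nor `M'` has crossing pairs, the men `m, m₁, …`
of such a chain move strictly monotonically along their line, which is impossible in a finite
matching. Hence no woman prefers `M'` to `M` (nor `M` to `M'`), and a pair of `M` missing from
`M'` would, not blocking `M'`, produce such a woman.
-/

namespace SMTI

variable {Mty Wty : Type} {I : SMTI Mty Wty} {M M' : Finset (Mty × Wty)}
  {m m₀ : Mty} {w w' : Wty}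

def WomanPrefers (I : SMTI Mty Wty) (M : Finset (Mty × Wty)) (w : Wty) (m : Mty) : Prop :=
  ∀ m', (m', w) ∈ M → rk (I.wpref w m) < rk (I.wpref w m')

def IsStable (I : SMTI Mty Wty) (M : Finset (Mty × Wty)) : Prop :=
  I.IsMatching M ∧ ∀ m w, ¬ I.Blocks M m w

theorem eq_of_rk_eq {o o' : Option ℕ} (ho : o.isSome) (h : rk o = rk o') : o = o' := by
  obtain ⟨a, rfl⟩ := Option.isSome_iff_exists.mp ho
  cases o' <;> simp_all [rk]

theorem NoTies.rk_mpref_lt (hI : I.NoTies) (hw : (I.mpref m w).isSome) (hne : w ≠ w')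
    (hle : rk (I.mpref m w) ≤ rk (I.mpref m w')) : rk (I.mpref m w) < rk (I.mpref m w') :=
  hle.lt_of_ne fun h => hne (hI.1 m w w' hw (eq_of_rk_eq hw h))

theorem NoTies.rk_wpref_lt (hI : I.NoTies) (hm : (I.wpref w m).isSome) (hne : m ≠ m₀)
    (hle : rk (I.wpref w m) ≤ rk (I.wpref w m₀)) : rk (I.wpref w m) < rk (I.wpref w m₀) :=
  hle.lt_of_ne fun h => hne (hI.2 w m m₀ hm (eq_of_rk_eq hm h))

theorem IsMatching.snd_eq (hM : I.IsMatching M) (h : (m, w) ∈ M) (h' : (m, w') ∈ M) : w = w' :=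
  congrArg Prod.snd (hM.2 _ h _ h' (Or.inl rfl))

theorem IsMatching.fst_eq (hM : I.IsMatching M) (h : (m, w) ∈ M) (h' : (m₀, w) ∈ M) : m = m₀ :=
  congrArg Prod.fst (hM.2 _ h _ h' (Or.inr rfl))

theorem IsMatching.womanPrefers_of_mem (hM : I.IsMatching M) (h₀ : (m₀, w) ∈ M)
    (hlt : rk (I.wpref w m) < rk (I.wpref w m₀)) : I.WomanPrefers M w m := by
  intro m' hm'
  rwa [← hM.fst_eq h₀ hm']

theorem WomanPrefers.not_mem (hw : I.WomanPrefers M w m) : (m, w) ∉ M :=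
  fun h => lt_irrefl _ (hw m h)

theorem IsSSNM.isStable [Preorder Mty] [Preorder Wty] (hM : I.IsSSNM M) : I.IsStable M :=
  ⟨hM.1, hM.2.2⟩

theorem IsStable.exists_preferred_partner (hI : I.NoTies) (hM : I.IsStable M)
    (hacc : I.Acc m w) (hmw : (m, w) ∉ M) :
    (∃ w', (m, w') ∈ M ∧ rk (I.mpref m w') < rk (I.mpref m w)) ∨
      ∃ m', (m', w) ∈ M ∧ rk (I.wpref w m') < rk (I.wpref w m) := by
  by_contra h
  push Not at h
  refine hM.2 m w ⟨hacc, hmw, fun w' hw' => ?_, fun m' hm' => ?_⟩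
  · exact hI.rk_mpref_lt hacc.1 (by rintro rfl; exact hmw hw') (h.1 w' hw')
  · exact hI.rk_wpref_lt hacc.2 (by rintro rfl; exact hmw hm') (h.2 m' hm')

theorem IsStable.exists_next (hI : I.NoTies) (hM : I.IsStable M) (hM' : I.IsStable M')
    (hmw : (m, w) ∈ M') (hw : I.WomanPrefers M w m) :
    ∃ w₁ m₁, (m, w₁) ∈ M ∧ (m₁, w₁) ∈ M' ∧ m₁ ≠ m ∧ I.WomanPrefers M w₁ m₁ := by
  obtain ⟨w₁, hw₁, hlt⟩ : ∃ w₁, (m, w₁) ∈ M ∧ rk (I.mpref m w₁) < rk (I.mpref m w) := by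
    refine (hM.exists_preferred_partner hI (hM'.1.1 _ hmw) hw.not_mem).resolve_right ?_
    rintro ⟨m', hm', hlt⟩
    exact lt_asymm hlt (hw m' hm')
  have hw₁w : w₁ ≠ w := by rintro rfl; exact lt_irrefl _ hlt
  obtain ⟨m₁, hm₁, hlt₁⟩ : ∃ m₁, (m₁, w₁) ∈ M' ∧ rk (I.wpref w₁ m₁) < rk (I.wpref w₁ m) := by
    refine (hM'.exists_preferred_partner hI (hM.1.1 _ hw₁)
      fun h => hw₁w (hM'.1.snd_eq h hmw)).resolve_left ?_
    rintro ⟨w', hw', hlt'⟩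
    rw [hM'.1.snd_eq hw' hmw] at hlt'
    exact lt_asymm hlt hlt'
  exact ⟨w₁, m₁, hw₁, hm₁, by rintro rfl; exact lt_irrefl _ hlt₁,
    hM.1.womanPrefers_of_mem hw₁ hlt₁⟩

section Noncrossing

variable [LinearOrder Mty] [LinearOrder Wty]

theorem Noncrossing.dual (hM : Noncrossing M) :
    Noncrossing (Mty := Mtyᵒᵈ) (Wty := Wtyᵒᵈ) M :=
  fun p hp q hq hc => hM p hp q hq hc.symm

theorem IsSSNM.dual (hM : I.IsSSNM M) : IsSSNM (Mty := Mtyᵒᵈ) (Wty := Wtyᵒᵈ) I M :=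
  ⟨hM.1, hM.2.1.dual, hM.2.2⟩

def AscendingLink (I : SMTI Mty Wty) (M M' : Finset (Mty × Wty)) (m : Mty) (w : Wty) : Prop :=
  (m, w) ∈ M' ∧ I.WomanPrefers M w m ∧ ∃ m₀ < m, (m₀, w) ∈ M

theorem AscendingLink.exists_next (hI : I.NoTies) (hM : I.IsSSNM M) (hM' : I.IsSSNM M')
    (h : I.AscendingLink M M' m w) : ∃ m₁ w₁, m < m₁ ∧ I.AscendingLink M M' m₁ w₁ := by
  obtain ⟨hmw, hw, m₀, hm₀m, hm₀w⟩ := h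
  obtain ⟨w₁, m₁, hmw₁, hm₁w₁, hm₁m, hw₁⟩ := hM.isStable.exists_next hI hM'.isStable hmw hw
  have hww₁ : w < w₁ := by
    rcases lt_trichotomy w w₁ with h | rfl | h
    · exact h
    · exact absurd hmw₁ hw.not_mem
    · exact absurd (Or.inl ⟨hm₀m, h⟩) (hM.2.1 _ hm₀w _ hmw₁)
  have hmm₁ : m < m₁ := by
    rcases lt_trichotomy m m₁ with h | rfl | h
    · exact h
    · exact absurd rfl hm₁m
    · exact absurd (Or.inr ⟨h, hww₁⟩) (hM'.2.1 _ hmw _ hm₁w₁)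
  exact ⟨m₁, w₁, hmm₁, hm₁w₁, hw₁, m, hmm₁, hmw₁⟩

theorem not_ascendingLink (hI : I.NoTies) (hM : I.IsSSNM M) (hM' : I.IsSSNM M') :
    ¬ I.AscendingLink M M' m w := by
  intro h
  obtain ⟨p, hp, hmax⟩ := (M'.filter fun p => I.AscendingLink M M' p.1 p.2).exists_max_image
    Prod.fst ⟨(m, w), Finset.mem_filter.2 ⟨h.1, h⟩⟩
  obtain ⟨m₁, w₁, hlt, h₁⟩ := (Finset.mem_filter.1 hp).2.exists_next hI hM hM'
  exact (hmax (m₁, w₁) (Finset.mem_filter.2 ⟨h₁.1, h₁⟩)).not_gt hlt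

theorem not_womanPrefers_of_mem_of_mem (hI : I.NoTies) (hM : I.IsSSNM M) (hM' : I.IsSSNM M')
    (hmw : (m, w) ∈ M') (hm₀w : (m₀, w) ∈ M) : ¬ I.WomanPrefers M w m := by
  intro hw
  rcases lt_trichotomy m₀ m with h | rfl | h
  · exact not_ascendingLink hI hM hM' ⟨hmw, hw, m₀, h, hm₀w⟩
  · exact hw.not_mem hm₀w
  · exact not_ascendingLink (Mty := Mtyᵒᵈ) (Wty := Wtyᵒᵈ) hI hM.dual hM'.dual
      ⟨hmw, hw, m₀, h, hm₀w⟩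

theorem not_womanPrefers_of_mem (hI : I.NoTies) (hM : I.IsSSNM M) (hM' : I.IsSSNM M')
    (hmw : (m, w) ∈ M') : ¬ I.WomanPrefers M w m := by
  intro hw
  obtain ⟨w₁, m₁, hmw₁, hm₁w₁, -, hw₁⟩ := hM.isStable.exists_next hI hM'.isStable hmw hw
  exact not_womanPrefers_of_mem_of_mem hI hM hM' hm₁w₁ hmw₁ hw₁

theorem IsSSNM.subset (hI : I.NoTies) (hM : I.IsSSNM M) (hM' : I.IsSSNM M') : M ⊆ M' := by
  rintro ⟨m, w⟩ hmw
  by_contra hmw'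
  rcases hM'.isStable.exists_preferred_partner hI (hM.1.1 _ hmw) hmw' with
    ⟨w', hw', hlt⟩ | ⟨m', hm', hlt⟩
  · obtain ⟨m'', hm'', hlt'⟩ : ∃ m'', (m'', w') ∈ M ∧
        rk (I.wpref w' m'') < rk (I.wpref w' m) := by
      refine (hM.isStable.exists_preferred_partner hI (hM'.1.1 _ hw')
        fun h => (hM.1.snd_eq h hmw ▸ hlt).false).resolve_left ?_
      rintro ⟨w'', hw'', hlt''⟩
      rw [hM.1.snd_eq hw'' hmw] at hlt''
      exact lt_asymm hlt hlt''
    exact not_womanPrefers_of_mem hI hM' hM hm'' (hM'.1.womanPrefers_of_mem hw' hlt')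
  · exact not_womanPrefers_of_mem hI hM hM' hm' (hM.1.womanPrefers_of_mem hmw hlt)

end Noncrossing

end SMTI

/-- in an SMI instance, there is at most one strongly stable
noncrossing matching. -/
theorem stmt1 {n : ℕ} (I : SMTI (Fin n) (Fin n)) (hI : I.NoTies)
    (M M' : Finset (Fin n × Fin n)) (hM : I.IsSSNM M) (hM' : I.IsSSNM M') :
    M = M' :=
  (hM.subset hI hM').antisymm (hM'.subset hI hM)
end

section
/- Consider the SMTI instance with six men placed top to bottom in the order p_1, p_3, a_1, a_2, p_2, p_4 on one line and four women placed top to bottom in the order q_1, q_3, q_2, q_4 on a parallel line, with preference lists: p_1: q_1; a_1: (q_1 q_2) tied; p_2: q_2; p_3: q_3; a_2: (q_3 q_4) tied; p_4: q_4; q_1: a_1, p_1; q_2: a_1, p_2; q_3: a_2, p_3; q_4: a_2, p_4. Then every weak-SSNM of this instance is equal either to M_0 = {(p_1, q_1), (a_1, q_2), (p_3, q_3), (a_2, q_4)} or to M_1 = {(a_1, q_1), (p_2, q_2), (a_2, q_3), (p_4, q_4)}. -/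
open scoped Classical

/-- The variable-gadget instance.  Men, top to bottom (indices `0..5`):
`p₁, p₃, a₁, a₂, p₂, p₄`.  Women, top to bottom (indices `0..3`): `q₁, q₃, q₂, q₄`.
Preference lists: `p₁: q₁`; `a₁: (q₁ q₂)` tied; `p₂: q₂`; `p₃: q₃`; `a₂: (q₃ q₄)` tied;
`p₄: q₄`; `q₁: a₁, p₁`; `q₂: a₁, p₂`; `q₃: a₂, p₃`; `q₄: a₂, p₄`. -/
def inst3 : SMTI (Fin 6) (Fin 4) where
  mpref m w :=
    if (m.val, w.val) ∈ [(0, 0), (2, 0), (2, 2), (4, 2), (1, 1), (3, 1), (3, 3), (5, 3)]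
    then some 0 else none
  wpref w m :=
    if (w.val, m.val) ∈ [(0, 2), (2, 2), (1, 3), (3, 3)] then some 0
    else if (w.val, m.val) ∈ [(0, 0), (2, 4), (1, 1), (3, 5)] then some 1
    else none


/-! In each half of the instance, each of the two women (`q₁, q₂`, resp. `q₃, q₄`) ranks first
the man `a₁` (resp. `a₂`), who is indifferent between them, and second a man who accepts only her.
Absence of blocking pairs forces both women of a half to be matched and `a` to be matched to one of
them, which leaves exactly two matchings per half.  Of the four combinations, the two mixed ones
contain crossing pairs. -/

namespace SMTI

variable {Mty Wty : Type} {I : SMTI Mty Wty} {M : Finset (Mty × Wty)}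

instance (I : SMTI Mty Wty) (m : Mty) (w : Wty) : Decidable (I.Acc m w) :=
  inferInstanceAs (Decidable (_ ∧ _))

namespace IsMatching

theorem acc (hM : I.IsMatching M) {m : Mty} {w : Wty} (h : (m, w) ∈ M) : I.Acc m w :=
  hM.1 _ h

theorem fst_eq_s3 (hM : I.IsMatching M) {m m' : Mty} {w : Wty} (h : (m, w) ∈ M)
    (h' : (m', w) ∈ M) : m = m' :=
  congrArg Prod.fst (hM.2 _ h _ h' (Or.inr rfl))

theorem snd_eq_s3 (hM : I.IsMatching M) {m : Mty} {w w' : Wty} (h : (m, w) ∈ M)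
    (h' : (m, w') ∈ M) : w = w' :=
  congrArg Prod.snd (hM.2 _ h _ h' (Or.inl rfl))

theorem eq_of_subset (hM : I.IsMatching M) {S : Finset (Mty × Wty)} (hS : S ⊆ M)
    (hcover : ∀ x : Mty × Wty, I.Acc x.1 x.2 → ∃ y ∈ S, x.1 = y.1 ∨ x.2 = y.2) : M = S := by
  refine subset_antisymm (fun x hx => ?_) hS
  obtain ⟨y, hy, hxy⟩ := hcover x (hM.1 x hx)
  rwa [hM.2 x hx y (hS hy) hxy]

end IsMatching

theorem blocks_of_unmatched {m : Mty} {w : Wty} (hacc : I.Acc m w) (hm : ∀ w', (m, w') ∉ M)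
    (hw : ∀ m', (m', w) ∈ M → rk (I.wpref w m) < rk (I.wpref w m')) : I.Blocks M m w :=
  ⟨hacc, hm w, fun w' h => absurd h (hm w'), hw⟩

theorem exists_mem_of_acc_unique (hM : I.IsMatching M) (hB : ∀ m w, ¬ I.Blocks M m w)
    {p : Mty} {q : Wty} (hacc : I.Acc p q) (honly : ∀ w, I.Acc p w → w = q) :
    ∃ m, (m, q) ∈ M := by
  by_contra! hq
  have hp : ∀ w, (p, w) ∉ M := fun w h => hq p (honly w (hM.acc h) ▸ h)
  exact hB p q (blocks_of_unmatched hacc hp fun m' h => absurd h (hq m'))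

structure IsVariableGadget (I : SMTI Mty Wty) (p₁ a p₂ : Mty) (q₁ q₂ : Wty) : Prop where
  ne : q₁ ≠ q₂
  acc_p₁ : I.Acc p₁ q₁
  acc_a : I.Acc a q₁
  acc_p₂ : I.Acc p₂ q₂
  eq_of_acc_p₁ : ∀ w, I.Acc p₁ w → w = q₁
  eq_of_acc_p₂ : ∀ w, I.Acc p₂ w → w = q₂
  eq_of_acc_a : ∀ w, I.Acc a w → w = q₁ ∨ w = q₂
  eq_of_acc_q₁ : ∀ m, I.Acc m q₁ → m = a ∨ m = p₁
  eq_of_acc_q₂ : ∀ m, I.Acc m q₂ → m = a ∨ m = p₂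
  a_lt_p₁ : rk (I.wpref q₁ a) < rk (I.wpref q₁ p₁)

theorem IsVariableGadget.mem_or_mem {p₁ a p₂ : Mty} {q₁ q₂ : Wty}
    (hG : I.IsVariableGadget p₁ a p₂ q₁ q₂) (hM : I.IsMatching M)
    (hB : ∀ m w, ¬ I.Blocks M m w) :
    ((p₁, q₁) ∈ M ∧ (a, q₂) ∈ M) ∨ ((a, q₁) ∈ M ∧ (p₂, q₂) ∈ M) := by
  have hap : a ≠ p₁ := fun h => (h ▸ hG.a_lt_p₁).ne rfl
  obtain ⟨m₁, hm₁⟩ := exists_mem_of_acc_unique hM hB hG.acc_p₁ hG.eq_of_acc_p₁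
  rcases hG.eq_of_acc_q₁ m₁ (hM.acc hm₁) with rfl | rfl
  · refine .inr ⟨hm₁, ?_⟩
    obtain ⟨m₂, hm₂⟩ := exists_mem_of_acc_unique hM hB hG.acc_p₂ hG.eq_of_acc_p₂
    rcases hG.eq_of_acc_q₂ m₂ (hM.acc hm₂) with rfl | rfl
    · exact absurd (hM.snd_eq_s3 hm₁ hm₂) hG.ne
    · exact hm₂
  · refine .inl ⟨hm₁, ?_⟩
    by_contra haq₂
    -- otherwise `a` is single, and `q₁` prefers him to her partner `p₁`
    have ha : ∀ w, (a, w) ∉ M := fun w h => by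
      rcases hG.eq_of_acc_a w (hM.acc h) with rfl | rfl
      exacts [hap (hM.fst_eq_s3 h hm₁), haq₂ h]
    exact hB a q₁ <|
      blocks_of_unmatched hG.acc_a ha fun m' h => hM.fst_eq_s3 h hm₁ ▸ hG.a_lt_p₁

end SMTI

theorem inst3_isVariableGadget_left : inst3.IsVariableGadget 0 2 4 0 2 := by
  constructor <;> decide

theorem inst3_isVariableGadget_right : inst3.IsVariableGadget 1 3 5 1 3 := by
  constructor <;> decide

/-- every weak-SSNM of the variable-gadget instance equals either
`M₀ = {(p₁,q₁),(a₁,q₂),(p₃,q₃),(a₂,q₄)}` or `M₁ = {(a₁,q₁),(p₂,q₂),(a₂,q₃),(p₄,q₄)}`. -/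
theorem stmt3 (M : Finset (Fin 6 × Fin 4)) (h : inst3.IsSSNM M) :
    M = ({((0 : Fin 6), (0 : Fin 4)), (2, 2), (1, 1), (3, 3)} : Finset (Fin 6 × Fin 4)) ∨
    M = ({((2 : Fin 6), (0 : Fin 4)), (4, 2), (3, 1), (5, 3)} : Finset (Fin 6 × Fin 4)) := by
  obtain ⟨hM, hNC, hB⟩ := h
  rcases inst3_isVariableGadget_left.mem_or_mem hM hB with ⟨h00, h22⟩ | ⟨h20, h42⟩ <;>
    rcases inst3_isVariableGadget_right.mem_or_mem hM hB with ⟨h11, h33⟩ | ⟨h31, h53⟩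
  · left
    exact hM.eq_of_subset (by simp [Finset.insert_subset_iff, *]) (by decide)
  · exact absurd (.inl ⟨by decide, by decide⟩) (hNC _ h22 _ h31)
  · exact absurd (.inr ⟨by decide, by decide⟩) (hNC _ h20 _ h11)
  · right
    exact hM.eq_of_subset (by simp [Finset.insert_subset_iff, *]) (by decide)
end

section
/- For every 3SAT instance f in which each variable occurs at most three times, at most twice positively and at most twice negatively, and each clause has two or three literals, the SMTI instance I(f) constructed below admits a weak-SSNM if and only if f is satisfiable. -/
open scoped Classical

/-- A restricted 3SAT instance: `N` variables, `M2` 2-clauses (first) followed by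
`M3` 3-clauses; a literal is a pair (variable, polarity); each variable occurs at
most three times, at most twice positively and at most twice negatively. -/
structure CNF3 where
  N : ℕ
  M2 : ℕ
  M3 : ℕ
  clauses : Fin (M2 + M3) → List (Fin N × Bool)
  len_two : ∀ j : Fin (M2 + M3), j.val < M2 → (clauses j).length = 2
  len_three : ∀ j : Fin (M2 + M3), M2 ≤ j.val → (clauses j).length = 3
  occ_pos : ∀ v : Fin N, (∑ j : Fin (M2 + M3), (clauses j).count (v, true)) ≤ 2
  occ_neg : ∀ v : Fin N, (∑ j : Fin (M2 + M3), (clauses j).count (v, false)) ≤ 2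
  occ_total : ∀ v : Fin N,
    (∑ j : Fin (M2 + M3), ((clauses j).count (v, true) + (clauses j).count (v, false))) ≤ 3

/-- `f` is satisfiable: some assignment makes every clause contain a true literal. -/
def CNF3.Satisfiable (f : CNF3) : Prop :=
  ∃ A : Fin f.N → Bool, ∀ j : Fin (f.M2 + f.M3), ∃ l ∈ f.clauses j, A l.1 = l.2

/-- Number of occurrences of the literal `l` strictly before position `k` of clause `j`
(in clause-then-position order). -/
def CNF3.prevOcc (f : CNF3) (l : Fin f.N × Bool) (j : Fin (f.M2 + f.M3)) (k : ℕ) : ℕ :=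
  (∑ j' : Fin (f.M2 + f.M3), if j'.val < j.val then (f.clauses j').count l else 0) +
    ((f.clauses j).take k).count l

/-- The slot (`0`-based) of the variable-gadget man corresponding to an occurrence of
polarity `b` that is preceded by `t` occurrences of the same literal:
slot `0` = `p_{i,1}` (1st negative), `1` = `p_{i,2}` (1st positive),
`2` = `p_{i,3}` (2nd negative), `3` = `p_{i,4}` (2nd positive). -/
def pslot (b : Bool) (t : ℕ) : Fin 4 :=
  ⟨2 * min t 1 + (if b then 1 else 0), by have := Nat.min_le_right t 1; split <;> omega⟩

/-- The `k`-th literal of clause `j` is an occurrence of variable `i` whose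
corresponding variable-gadget man is `p_{i, s+1}`. -/
def CNF3.zToP (f : CNF3) (j : Fin (f.M2 + f.M3)) (k : Fin 3) (i : Fin f.N) (s : Fin 4) :
    Prop :=
  ∃ b : Bool, (f.clauses j)[k.val]? = some (i, b) ∧ s = pslot b (f.prevOcc (i, b) j k.val)

/-- The men of `I(f)`:  `p i s` is `p_{i+1, s+1}`, `a i s` is `a_{i+1, s+1}`, `sep` is
the separator man `s`, and `y j k` is `y_{j+1, k+1}` (for a 2-clause only `y j 0`,
i.e. `y_j`, has a nonempty list; the remaining `y j k` are dummies). -/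
inductive Man5 (N M : ℕ) : Type
  | p : Fin N → Fin 4 → Man5 N M
  | a : Fin N → Fin 2 → Man5 N M
  | sep : Man5 N M
  | y : Fin M → Fin 7 → Man5 N M

/-- The women of `I(f)`:  `q i s` is `q_{i+1, s+1}`, `t` is the separator woman,
`v j k` is `v_{j+1, k+1}` and `z j k` is `z_{j+1, k+1}` (for a 2-clause only
`z j 0` and `z j 1` have nonempty lists; the rest are dummies). -/
inductive Woman5 (N M : ℕ) : Type
  | q : Fin N → Fin 4 → Woman5 N M
  | t : Woman5 N M
  | v : Fin M → Fin 6 → Woman5 N M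
  | z : Fin M → Fin 3 → Woman5 N M

/-- Top-to-bottom position of a man: for each variable `i` the men
`p_{i,1}, p_{i,3}, a_{i,1}, a_{i,2}, p_{i,2}, p_{i,4}`; then the separator `s`;
then for each clause `j` the men `y_{j,1}, …, y_{j,7}`. -/
def Man5.key {N M : ℕ} : Man5 N M → ℕ
  | .p i s => 6 * i.val +
      (if s.val = 0 then 0 else if s.val = 2 then 1 else if s.val = 1 then 4 else 5)
  | .a i s => 6 * i.val + 2 + s.val
  | .sep => 6 * N
  | .y j k => 6 * N + 1 + 7 * j.val + k.val

/-- Top-to-bottom position of a woman: for each variable `i` the women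
`q_{i,1}, q_{i,3}, q_{i,2}, q_{i,4}`; then the separator `t`; then for each clause `j`
the women `v_{j,1}, v_{j,2}, v_{j,3}, z_{j,1}, z_{j,2}, v_{j,4}, v_{j,5}, v_{j,6}, z_{j,3}`. -/
def Woman5.key {N M : ℕ} : Woman5 N M → ℕ
  | .q i s => 4 * i.val +
      (if s.val = 0 then 0 else if s.val = 2 then 1 else if s.val = 1 then 2 else 3)
  | .t => 4 * N
  | .v j k => 4 * N + 1 + 9 * j.val +
      (if k.val ≤ 2 then k.val else if k.val = 3 then 5 else if k.val = 4 then 6 else 7)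
  | .z j k => 4 * N + 1 + 9 * j.val +
      (if k.val = 0 then 3 else if k.val = 1 then 4 else 8)

instance {N M : ℕ} : Preorder (Man5 N M) := Preorder.lift Man5.key
instance {N M : ℕ} : Preorder (Woman5 N M) := Preorder.lift Woman5.key

open Classical in
/-- The SMTI instance `I(f)` of the reduction.  Preference lists (rank `0` before
rank `1`, equal ranks tied):
`p_{i,ℓ}: q_{i,ℓ}, z_{⋯}` (the `z`-woman of the corresponding occurrence of `x_i`);
`a_{i,1}: (q_{i,1} q_{i,2})`; `a_{i,2}: (q_{i,3} q_{i,4})`;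
`q_{i,ℓ}: a_{i,⌈ℓ/2⌉}, p_{i,ℓ}`; `s: t`; `t: s`;
for a 2-clause `C_j`: `y_j: (z_{j,1} z_{j,2})`; `z_{j,k}: y_j, p_{⋯}`;
for a 3-clause `C_j`: `y_{j,1}: (v_{j,1} v_{j,3})`; `y_{j,2}: (v_{j,2} z_{j,1})`;
`y_{j,3}: (v_{j,3} v_{j,4})`; `y_{j,4}: (z_{j,2} v_{j,5})`; `y_{j,5}: (v_{j,4} v_{j,6})`;
`y_{j,6}: (v_{j,5} z_{j,3})`; `y_{j,7}: v_{j,6}`; `v_{j,1}: y_{j,1}`; `v_{j,2}: y_{j,2}`;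
`v_{j,3}: y_{j,1}, y_{j,3}`; `z_{j,1}: y_{j,2}, p_{⋯}`; `z_{j,2}: y_{j,4}, p_{⋯}`;
`v_{j,4}: y_{j,5}, y_{j,3}`; `v_{j,5}: y_{j,6}, y_{j,4}`; `v_{j,6}: y_{j,5}, y_{j,7}`;
`z_{j,3}: y_{j,6}, p_{⋯}`.  Unused persons are dummies with empty lists. -/
noncomputable def instOf (f : CNF3) :
    SMTI (Man5 f.N (f.M2 + f.M3)) (Woman5 f.N (f.M2 + f.M3)) where
  mpref m w :=
    match m, w with
    | .p i s, .q i' s' => if i' = i ∧ s' = s then some 0 else none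
    | .p i s, .z j k => if f.zToP j k i s then some 1 else none
    | .a i s, .q i' s' => if i' = i ∧ s'.val / 2 = s.val then some 0 else none
    | .sep, .t => some 0
    | .y j k, .z j' k' =>
        if j' = j ∧ ((j.val < f.M2 ∧ k.val = 0 ∧ k'.val < 2) ∨
          (f.M2 ≤ j.val ∧ ((k.val = 1 ∧ k'.val = 0) ∨ (k.val = 3 ∧ k'.val = 1) ∨
            (k.val = 5 ∧ k'.val = 2))))
        then some 0 else none
    | .y j k, .v j' k' =>
        if j' = j ∧ f.M2 ≤ j.val ∧ ((k.val = 0 ∧ (k'.val = 0 ∨ k'.val = 2)) ∨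
          (k.val = 1 ∧ k'.val = 1) ∨ (k.val = 2 ∧ (k'.val = 2 ∨ k'.val = 3)) ∨
          (k.val = 3 ∧ k'.val = 4) ∨ (k.val = 4 ∧ (k'.val = 3 ∨ k'.val = 5)) ∨
          (k.val = 5 ∧ k'.val = 4) ∨ (k.val = 6 ∧ k'.val = 5))
        then some 0 else none
    | _, _ => none
  wpref w m :=
    match w, m with
    | .q i s, .a i' s' => if i' = i ∧ s'.val = s.val / 2 then some 0 else none
    | .q i s, .p i' s' => if i' = i ∧ s' = s then some 1 else none
    | .t, .sep => some 0
    | .z j k, .y j' k' =>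
        if j' = j ∧ ((j.val < f.M2 ∧ k'.val = 0 ∧ k.val < 2) ∨
          (f.M2 ≤ j.val ∧ ((k.val = 0 ∧ k'.val = 1) ∨ (k.val = 1 ∧ k'.val = 3) ∨
            (k.val = 2 ∧ k'.val = 5))))
        then some 0 else none
    | .z j k, .p i s => if f.zToP j k i s then some 1 else none
    | .v j k, .y j' k' =>
        if j' = j ∧ f.M2 ≤ j.val then
          if (k.val = 0 ∧ k'.val = 0) ∨ (k.val = 1 ∧ k'.val = 1) ∨
             (k.val = 2 ∧ k'.val = 0) ∨ (k.val = 3 ∧ k'.val = 4) ∨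
             (k.val = 4 ∧ k'.val = 5) ∨ (k.val = 5 ∧ k'.val = 4)
          then some 0
          else if (k.val = 2 ∧ k'.val = 2) ∨ (k.val = 3 ∧ k'.val = 2) ∨
                  (k.val = 4 ∧ k'.val = 3) ∨ (k.val = 5 ∧ k'.val = 6)
          then some 1
          else none
        else none
    | _, _ => none

/-!
A weak-SSNM must contain the separator pair `(s, t)`, so no `p`-man can be matched to a clause
woman: that pair would cross `(s, t)`. Stability then forces both `a`-men of a variable gadget to
be matched, and noncrossing inside the gadget leaves the `q`-women of only one polarity to their
`p`-men; that polarity is the truth value of the variable. In every clause gadget stability and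
noncrossing leave some `z`-woman free, whose `p`-man must then hold his `q`, so her literal is
true. Conversely, a satisfying assignment with a chosen true literal per clause yields an explicit
matching in which every matched man has a first choice and every woman acceptable to a single man
holds a first choice.
-/

namespace SMTI

variable {Mty Wty : Type} {I : SMTI Mty Wty} {M : Finset (Mty × Wty)} {m : Mty} {w : Wty}

lemma rk_some_zero_le (o : Option ℕ) : rk (some 0) ≤ rk o := by
  cases o <;> simp [rk]

lemma IsMatching.right_unique (hM : I.IsMatching M) {w' : Wty} (h : (m, w) ∈ M)
    (h' : (m, w') ∈ M) : w = w' :=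
  congrArg Prod.snd (hM.2 _ h _ h' (Or.inl rfl))

lemma IsMatching.left_unique (hM : I.IsMatching M) {m' : Mty} (h : (m, w) ∈ M)
    (h' : (m', w) ∈ M) : m = m' :=
  congrArg Prod.fst (hM.2 _ h _ h' (Or.inr rfl))

variable [Preorder Mty] [Preorder Wty]

lemma IsSSNM.exists_partner_of_single (hM : I.IsSSNM M) (hacc : I.Acc m w)
    (hm : ∀ w', (m, w') ∉ M) :
    ∃ m', (m', w) ∈ M ∧ rk (I.wpref w m') ≤ rk (I.wpref w m) := by
  by_contra! h
  exact hM.2.2 m w ⟨hacc, hm w, fun w' hw' => absurd hw' (hm w'), h⟩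

lemma IsSSNM.exists_partner_of_single_woman (hM : I.IsSSNM M) (hacc : I.Acc m w)
    (hw : ∀ m', (m', w) ∉ M) : ∃ w', (m, w') ∈ M := by
  by_contra! h
  obtain ⟨m', hm', -⟩ := hM.exists_partner_of_single hacc h
  exact hw m' hm'

theorem isSSNM_of_mate (μ : Mty → Option Wty) (hM : ∀ m w, (m, w) ∈ M ↔ μ m = some w)
    (hacc : ∀ m w, μ m = some w → I.Acc m w ∧ I.mpref m w = some 0)
    (hinj : ∀ m m' w, μ m = some w → μ m' = some w → m = m')
    (hmono : ∀ m m' w w', μ m = some w → μ m' = some w' → m < m' → w < w')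
    (hfree : ∀ m w, μ m = none → I.Acc m w →
      ∃ m', μ m' = some w ∧ I.wpref w m' = some 0) :
    I.IsSSNM M := by
  refine ⟨⟨fun p hp => (hacc _ _ ((hM _ _).1 hp)).1, ?_⟩, ?_, ?_⟩
  · rintro ⟨m, w⟩ hp ⟨m', w'⟩ hp' (rfl | rfl) <;> rw [hM] at hp hp'
    · rw [Option.some_injective _ (hp.symm.trans hp')]
    · rw [hinj _ _ _ hp hp']
  · rintro ⟨m, w⟩ hp ⟨m', w'⟩ hp' (⟨hlt, hlt'⟩ | ⟨hlt, hlt'⟩) <;> rw [hM] at hp hp'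
    · exact lt_asymm (hmono _ _ _ _ hp hp' hlt) hlt'
    · exact lt_asymm (hmono _ _ _ _ hp' hp hlt) hlt'
  · rintro m w ⟨hmw, -, hm, hw⟩
    cases hμ : μ m with
    | some w' =>
      have := hm w' ((hM _ _).2 hμ)
      rw [(hacc _ _ hμ).2] at this
      exact (rk_some_zero_le _).not_gt this
    | none =>
      obtain ⟨m', hm', hrk⟩ := hfree m w hμ hmw
      have := hw m' ((hM _ _).2 hm')
      rw [hrk] at this
      exact (rk_some_zero_le _).not_gt this

end SMTI

def CNF3.isTwo (f : CNF3) (j : Fin (f.M2 + f.M3)) : Bool := decide (j.val < f.M2)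

lemma CNF3.lt_iff_isTwo (f : CNF3) (j : Fin (f.M2 + f.M3)) : j.val < f.M2 ↔ f.isTwo j = true :=
  decide_eq_true_iff.symm

lemma CNF3.le_iff_isTwo (f : CNF3) (j : Fin (f.M2 + f.M3)) :
    f.M2 ≤ j.val ↔ f.isTwo j = false := by
  rw [CNF3.isTwo, decide_eq_false_iff_not, not_lt]

lemma CNF3.length_clauses (f : CNF3) (j : Fin (f.M2 + f.M3)) :
    (f.clauses j).length = if f.isTwo j then 2 else 3 := by
  by_cases h : j.val < f.M2
  · simp [CNF3.isTwo, h, f.len_two j h]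
  · simp [CNF3.isTwo, h, f.len_three j (by omega)]

lemma CNF3.exists_index_of_mem (f : CNF3) {j : Fin (f.M2 + f.M3)} {l : Fin f.N × Bool}
    (h : l ∈ f.clauses j) : ∃ k : Fin 3, (f.clauses j)[k.val]? = some l := by
  obtain ⟨n, hn, rfl⟩ := List.getElem_of_mem h
  have : (f.clauses j).length ≤ 3 := by rw [f.length_clauses]; split <;> omega
  exact ⟨⟨n, by omega⟩, List.getElem?_eq_getElem hn⟩

lemma pslot_val_mod_two (b : Bool) (t : ℕ) : (pslot b t).val % 2 = b.toNat := by
  cases b <;> simp [pslot]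

lemma CNF3.zToP.exists_getElem? {f : CNF3} {j k i s} (h : f.zToP j k i s) :
    ∃ b, (f.clauses j)[k.val]? = some (i, b) ∧ s.val % 2 = b.toNat := by
  obtain ⟨b, hb, rfl⟩ := h
  exact ⟨b, hb, pslot_val_mod_two b _⟩

def clauseWoman {N M : ℕ} (j : Fin M) : Fin 6 ⊕ Fin 3 → Woman5 N M
  | .inl k => .v j k
  | .inr k => .z j k

lemma clauseWoman_injective {N M : ℕ} (j : Fin M) :
    Function.Injective (clauseWoman j : Fin 6 ⊕ Fin 3 → Woman5 N M) := by
  rintro (k | k) (k' | k') h <;> simp_all [clauseWoman]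

def gadgetPos : Fin 6 ⊕ Fin 3 → ℕ
  | .inl k => if k.val ≤ 2 then k.val else if k.val = 3 then 5 else if k.val = 4 then 6 else 7
  | .inr k => if k.val = 0 then 3 else if k.val = 1 then 4 else 8

lemma gadgetPos_le (t : Fin 6 ⊕ Fin 3) : gadgetPos t ≤ 8 := by
  cases t <;> simp only [gadgetPos] <;> split_ifs <;> omega

/-- The rank that the clause-gadget woman `t` gives to `y_{j,k+1}`, in the gadget of a 2-clause
(`two`) or of a 3-clause. -/
def gadgetPref : Bool → Fin 6 ⊕ Fin 3 → Fin 7 → Option ℕ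
  | true, .inr 0, 0 | true, .inr 1, 0 => some 0
  | false, .inl 0, 0 | false, .inl 1, 1 | false, .inl 2, 0 | false, .inl 3, 4
  | false, .inl 4, 5 | false, .inl 5, 4 | false, .inr 0, 1 | false, .inr 1, 3
  | false, .inr 2, 5 => some 0
  | false, .inl 2, 2 | false, .inl 3, 2 | false, .inl 4, 3 | false, .inl 5, 6 => some 1
  | _, _, _ => none

/-- Matches the clause gadget so that every `z` except `z_{j,c+1}` is taken by the man she ranks
first. -/
def gadgetMate : Bool → Fin 3 → Fin 7 → Option (Fin 6 ⊕ Fin 3)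
  | true, 0, 0 => some (.inr 1)
  | true, _, 0 => some (.inr 0)
  | false, 0, 0 => some (.inl 0) | false, 0, 1 => some (.inl 1) | false, 0, 2 => some (.inl 2)
  | false, 0, 3 => some (.inr 1) | false, 0, 4 => some (.inl 5) | false, 0, 5 => some (.inr 2)
  | false, 1, 0 => some (.inl 2) | false, 1, 1 => some (.inr 0) | false, 1, 2 => some (.inl 3)
  | false, 1, 3 => some (.inl 4) | false, 1, 4 => some (.inl 5) | false, 1, 5 => some (.inr 2)
  | false, 2, 0 => some (.inl 2) | false, 2, 1 => some (.inr 0) | false, 2, 3 => some (.inr 1)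
  | false, 2, 4 => some (.inl 3) | false, 2, 5 => some (.inl 4) | false, 2, 6 => some (.inl 5)
  | _, _, _ => none

lemma gadgetMate_pref :
    ∀ two c k t, gadgetMate two c k = some t → (gadgetPref two t k).isSome := by
  decide

lemma gadgetMate_injective :
    ∀ two c k k' t, gadgetMate two c k = some t → gadgetMate two c k' = some t → k = k' := by
  decide

lemma gadgetMate_strictMono : ∀ two c k k' t t', gadgetMate two c k = some t →
    gadgetMate two c k' = some t' → k < k' → gadgetPos t < gadgetPos t' := by
  decide

lemma gadgetMate_covers_z : ∀ (two : Bool) (c k : Fin 3), c.val < (if two then 2 else 3) →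
    k.val < (if two then 2 else 3) → k ≠ c →
    ∃ k', gadgetMate two c k' = some (.inr k) ∧ gadgetPref two (.inr k) k' = some 0 := by
  decide

lemma gadgetMate_free : ∀ two c k t, gadgetMate two c k = none → (gadgetPref two t k).isSome →
    ∃ k', gadgetMate two c k' = some t ∧ gadgetPref two t k' = some 0 := by
  decide

/-- `L k t` stands for "`y_{j,k+1}` is matched to the gadget woman `t`"; the hypotheses are what a
weak-SSNM in which no `p`-man holds a clause woman yields inside one clause gadget. -/
theorem gadget_exists_free_z (two : Bool) (L : Fin 7 → Fin 6 ⊕ Fin 3 → Prop)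
    (hadj : ∀ k t, L k t → (gadgetPref two t k).isSome)
    (hfun : ∀ k t t', L k t → L k t' → t = t')
    (hnc : ∀ k k' t t', L k t → L k' t' → k < k' → gadgetPos t' < gadgetPos t → False)
    (hstab : ∀ k t, (gadgetPref two t k).isSome → (∃ t', L k t') ∨ ∃ k', L k' t) :
    ∃ c : Fin 3, c.val < (if two then 2 else 3) ∧ ∀ k, ¬ L k (.inr c) := by
  by_contra! hz
  cases two
  · obtain ⟨k0, hz0⟩ := hz 0 (by decide)
    obtain ⟨k1, hz1⟩ := hz 1 (by decide)
    obtain ⟨k2, hz2⟩ := hz 2 (by decide)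
    have adj_z :
        ∀ (c : Fin 3) k, (gadgetPref false (.inr c) k).isSome → k.val = 2 * c.val + 1 := by
      decide
    obtain rfl : k0 = 1 := Fin.ext (adj_z _ _ (hadj _ _ hz0))
    obtain rfl : k1 = 3 := Fin.ext (adj_z _ _ (hadj _ _ hz1))
    obtain rfl : k2 = 5 := Fin.ext (adj_z _ _ (hadj _ _ hz2))
    -- `y_{j,3}` is single: both of its women lie on the wrong side of `z_{j,1}` or `z_{j,2}`.
    have hy2 : ∀ t, ¬ L 2 t := by
      intro t ht
      have : t = .inl 2 ∨ t = .inl 3 := by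
        have adj : ∀ t, (gadgetPref false t 2).isSome → t = .inl 2 ∨ t = .inl 3 := by decide
        exact adj t (hadj _ _ ht)
      rcases this with rfl | rfl
      · exact hnc 1 2 _ _ hz0 ht (by decide) (by decide)
      · exact hnc 2 3 _ _ ht hz1 (by decide) (by decide)
    have hv3 : L 4 (.inl 3) := by
      rcases hstab 2 (.inl 3) (by decide) with ⟨t, ht⟩ | ⟨k, hk⟩
      · exact absurd ht (hy2 t)
      · have adj : ∀ k, (gadgetPref false (.inl 3) k).isSome → k = 2 ∨ k = 4 := by decide
        rcases adj k (hadj _ _ hk) with rfl | rfl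
        · exact absurd hk (hy2 _)
        · exact hk
    have adj_y6 : ∀ t, (gadgetPref false t 6).isSome → t = .inl 5 := by decide
    have adj_v5 : ∀ k, (gadgetPref false (.inl 5) k).isSome → k = 4 ∨ k = 6 := by decide
    have hy6 : ∀ t, ¬ L 6 t := by
      intro t ht
      obtain rfl := adj_y6 t (hadj _ _ ht)
      exact hnc 5 6 _ _ hz2 ht (by decide) (by decide)
    rcases hstab 6 (.inl 5) (by decide) with ⟨t, ht⟩ | ⟨k, hk⟩
    · exact hy6 t ht
    · rcases adj_v5 k (hadj _ _ hk) with rfl | rfl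
      · exact absurd (hfun _ _ _ hv3 hk) (by decide)
      · exact hy6 _ hk
  · obtain ⟨k0, hz0⟩ := hz 0 (by decide)
    obtain ⟨k1, hz1⟩ := hz 1 (by decide)
    have adj_z : ∀ (c : Fin 3) k, (gadgetPref true (.inr c) k).isSome → k = 0 := by decide
    obtain rfl := adj_z _ _ (hadj _ _ hz0)
    obtain rfl := adj_z _ _ (hadj _ _ hz1)
    exact absurd (hfun _ _ _ hz0 hz1) (by decide)

section Persons

variable {N M : ℕ}

instance : Finite (Man5 N M) :=
  Finite.of_surjective
    (fun x : (Fin N × Fin 4) ⊕ (Fin N × Fin 2) ⊕ Unit ⊕ (Fin M × Fin 7) => match x with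
      | .inl (i, s) => .p i s
      | .inr (.inl (i, s)) => .a i s
      | .inr (.inr (.inl ())) => .sep
      | .inr (.inr (.inr (j, k))) => .y j k)
    fun
      | .p i s => ⟨.inl (i, s), rfl⟩
      | .a i s => ⟨.inr (.inl (i, s)), rfl⟩
      | .sep => ⟨.inr (.inr (.inl ())), rfl⟩
      | .y j k => ⟨.inr (.inr (.inr (j, k))), rfl⟩

instance : Finite (Woman5 N M) :=
  Finite.of_surjective
    (fun x : (Fin N × Fin 4) ⊕ Unit ⊕ (Fin M × Fin 6) ⊕ (Fin M × Fin 3) => match x with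
      | .inl (i, s) => .q i s
      | .inr (.inl ()) => .t
      | .inr (.inr (.inl (j, k))) => .v j k
      | .inr (.inr (.inr (j, k))) => .z j k)
    fun
      | .q i s => ⟨.inl (i, s), rfl⟩
      | .t => ⟨.inr (.inl ()), rfl⟩
      | .v j k => ⟨.inr (.inr (.inl (j, k))), rfl⟩
      | .z j k => ⟨.inr (.inr (.inr (j, k))), rfl⟩

lemma Man5.key_injective : Function.Injective (Man5.key : Man5 N M → ℕ) := by
  intro m m' h
  cases m <;> cases m' <;>
    simp only [Man5.key, Man5.p.injEq, Man5.a.injEq, Man5.y.injEq, Fin.ext_iff, reduceCtorEq]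
      at h ⊢ <;>
    (try split_ifs at h) <;> omega

lemma key_q_bounds (i : Fin N) (s : Fin 4) :
    4 * i.val ≤ (.q i s : Woman5 N M).key ∧ (.q i s : Woman5 N M).key ≤ 4 * i.val + 3 := by
  simp only [Woman5.key]
  split_ifs <;> omega

lemma key_p (i : Fin N) (s : Fin 4) :
    (.p i s : Man5 N M).key = (.q i s : Woman5 N M).key + 2 * i.val + 2 * (s.val % 2) := by
  simp only [Man5.key, Woman5.key]
  split_ifs <;> omega

lemma key_a (i : Fin N) (s : Fin 2) (d : ℕ) (hd : d ≤ 1) :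
    (.a i s : Man5 N M).key =
      (.q i ⟨2 * s.val + d, by omega⟩ : Woman5 N M).key + 2 * i.val + 2 * (1 - d) := by
  simp only [Man5.key, Woman5.key]
  split_ifs <;> omega

lemma key_sep : (.sep : Man5 N M).key = 6 * N := rfl

lemma key_t : (.t : Woman5 N M).key = 4 * N := rfl

lemma key_y (j : Fin M) (k : Fin 7) : (.y j k : Man5 N M).key = 6 * N + 1 + 7 * j.val + k.val :=
  rfl

lemma key_clauseWoman (j : Fin M) (t : Fin 6 ⊕ Fin 3) :
    (clauseWoman j t : Woman5 N M).key = 4 * N + 1 + 9 * j.val + gadgetPos t := by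
  cases t <;> rfl

end Persons
namespace Reduction

section Acceptability

variable (f : CNF3)

lemma mpref_y_clauseWoman (j j' : Fin (f.M2 + f.M3)) (k : Fin 7) (t : Fin 6 ⊕ Fin 3) :
    (instOf f).mpref (.y j k) (clauseWoman j' t) =
      if j' = j ∧ (gadgetPref (f.isTwo j) t k).isSome then some 0 else none := by
  by_cases hj : j' = j
  · subst hj
    rcases t with k' | k' <;>
      simp only [instOf, clauseWoman, f.lt_iff_isTwo, f.le_iff_isTwo, true_and] <;>
      generalize f.isTwo j' = two <;> revert two k k' <;> decide
  · rcases t with k' | k' <;> simp only [instOf, clauseWoman, hj, false_and, if_false]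

lemma wpref_clauseWoman_y (j j' : Fin (f.M2 + f.M3)) (k : Fin 7) (t : Fin 6 ⊕ Fin 3) :
    (instOf f).wpref (clauseWoman j t) (.y j' k) =
      if j' = j then gadgetPref (f.isTwo j) t k else none := by
  by_cases hj : j' = j
  · subst hj
    rcases t with k' | k' <;>
      simp only [instOf, clauseWoman, f.lt_iff_isTwo, f.le_iff_isTwo, true_and, if_true] <;>
      generalize f.isTwo j' = two <;> revert two k k' <;> decide
  · rcases t with k' | k' <;> simp only [instOf, clauseWoman, hj, false_and, if_false]

lemma acc_y_clauseWoman_iff (j j' : Fin (f.M2 + f.M3)) (k : Fin 7) (t : Fin 6 ⊕ Fin 3) :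
    (instOf f).Acc (.y j k) (clauseWoman j' t) ↔
      j' = j ∧ (gadgetPref (f.isTwo j) t k).isSome := by
  simp only [SMTI.Acc, mpref_y_clauseWoman, wpref_clauseWoman_y]
  split_ifs <;> simp_all

variable {f}

lemma eq_t_of_acc_sep {w : Woman5 f.N (f.M2 + f.M3)} (h : (instOf f).Acc .sep w) : w = .t := by
  cases w <;> simp only [SMTI.Acc, instOf] at h <;> simp_all

lemma eq_sep_of_acc_t {m : Man5 f.N (f.M2 + f.M3)} (h : (instOf f).Acc m .t) : m = .sep := by
  cases m <;> simp only [SMTI.Acc, instOf] at h <;> simp_all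

lemma acc_p {i s} {w : Woman5 f.N (f.M2 + f.M3)} (h : (instOf f).Acc (.p i s) w) :
    w = .q i s ∨ ∃ j k, w = .z j k ∧ f.zToP j k i s := by
  cases w <;> simp only [SMTI.Acc, instOf] at h <;> (try split_ifs at h) <;> simp_all

lemma acc_a {i s} {w : Woman5 f.N (f.M2 + f.M3)} (h : (instOf f).Acc (.a i s) w) :
    ∃ s' : Fin 4, w = .q i s' ∧ s'.val / 2 = s.val := by
  cases w <;> simp only [SMTI.Acc, instOf] at h <;> (try split_ifs at h) <;> simp_all

lemma acc_q {i s} {m : Man5 f.N (f.M2 + f.M3)} (h : (instOf f).Acc m (.q i s)) :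
    m = .a i ⟨s.val / 2, by omega⟩ ∨ m = .p i s := by
  cases m <;> simp only [SMTI.Acc, instOf] at h <;> (try split_ifs at h) <;>
    simp_all [Fin.ext_iff]

lemma acc_y {j k} {w : Woman5 f.N (f.M2 + f.M3)} (h : (instOf f).Acc (.y j k) w) :
    ∃ t, w = clauseWoman j t ∧ (gadgetPref (f.isTwo j) t k).isSome := by
  cases w with
  | q i s => simp [SMTI.Acc, instOf] at h
  | t => simp [SMTI.Acc, instOf] at h
  | v j' k' =>
    obtain ⟨rfl, h⟩ := (acc_y_clauseWoman_iff f j j' k (.inl k')).1 h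
    exact ⟨_, rfl, h⟩
  | z j' k' =>
    obtain ⟨rfl, h⟩ := (acc_y_clauseWoman_iff f j j' k (.inr k')).1 h
    exact ⟨_, rfl, h⟩

lemma acc_clauseWoman {j t} {m : Man5 f.N (f.M2 + f.M3)}
    (h : (instOf f).Acc m (clauseWoman j t)) :
    (∃ k, m = .y j k ∧ (gadgetPref (f.isTwo j) t k).isSome) ∨ ∃ i s, m = .p i s := by
  cases m with
  | p i s => exact .inr ⟨i, s, rfl⟩
  | a i s => cases t <;> simp [SMTI.Acc, instOf, clauseWoman] at h
  | sep => cases t <;> simp [SMTI.Acc, instOf, clauseWoman] at h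
  | y j' k =>
    obtain ⟨rfl, h⟩ := (acc_y_clauseWoman_iff f j' j k t).1 h
    exact .inl ⟨k, rfl, h⟩

end Acceptability

section Necessity

variable {f : CNF3} {M : Finset (Man5 f.N (f.M2 + f.M3) × Woman5 f.N (f.M2 + f.M3))}

lemma sep_t_mem (hM : (instOf f).IsSSNM M) : (.sep, .t) ∈ M := by
  by_contra h
  obtain ⟨m, hm, -⟩ := hM.exists_partner_of_single (w := .t) ⟨rfl, rfl⟩ fun w hw =>
    h (eq_t_of_acc_sep (hM.1.1 _ hw) ▸ hw)
  exact h (eq_sep_of_acc_t (hM.1.1 _ hm) ▸ hm)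

lemma p_clauseWoman_not_mem (hM : (instOf f).IsSSNM M) (i : Fin f.N) (s : Fin 4)
    (j : Fin (f.M2 + f.M3)) (t : Fin 6 ⊕ Fin 3) : (.p i s, clauseWoman j t) ∉ M := by
  intro h
  refine hM.2.1 _ h _ (sep_t_mem hM) (.inl ⟨?_, ?_⟩)
  · change Man5.key _ < Man5.key _
    have := key_q_bounds (M := f.M2 + f.M3) i s
    rw [key_p, key_sep]
    omega
  · change Woman5.key _ < Woman5.key _
    rw [key_t, key_clauseWoman]
    omega

lemma eq_y_of_mem_clauseWoman (hM : (instOf f).IsSSNM M) {m j t}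
    (h : (m, clauseWoman j t) ∈ M) : ∃ k, m = .y j k := by
  rcases acc_clauseWoman (hM.1.1 _ h) with ⟨k, rfl, -⟩ | ⟨i, s, rfl⟩
  · exact ⟨k, rfl⟩
  · exact absurd h (p_clauseWoman_not_mem hM i s j t)

lemma exists_free_z (hM : (instOf f).IsSSNM M) (j : Fin (f.M2 + f.M3)) :
    ∃ k : Fin 3, k.val < (f.clauses j).length ∧ ∀ m, (m, .z j k) ∉ M := by
  let L : Fin 7 → Fin 6 ⊕ Fin 3 → Prop := fun k t => (.y j k, clauseWoman j t) ∈ M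
  have hadj : ∀ k t, L k t → (gadgetPref (f.isTwo j) t k).isSome := fun k t h =>
    ((acc_y_clauseWoman_iff f j j k t).1 (hM.1.1 _ h)).2
  have hfun : ∀ k t t', L k t → L k t' → t = t' := fun k t t' h h' =>
    clauseWoman_injective j (hM.1.right_unique h h')
  have hnc :
      ∀ k k' t t', L k t → L k' t' → k < k' → gadgetPos t' < gadgetPos t → False := by
    intro k k' t t' h h' hk ht
    refine hM.2.1 _ h _ h' (.inl ⟨?_, ?_⟩)
    · change Man5.key _ < Man5.key _
      rw [key_y, key_y]
      omega
    · change Woman5.key _ < Woman5.key _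
      rw [key_clauseWoman, key_clauseWoman]
      omega
  have hstab :
      ∀ k t, (gadgetPref (f.isTwo j) t k).isSome → (∃ t', L k t') ∨ ∃ k', L k' t := by
    intro k t hkt
    by_contra! h
    have hsingle : ∀ w, (.y j k, w) ∉ M := fun w hw => by
      obtain ⟨t', rfl, -⟩ := acc_y (hM.1.1 _ hw)
      exact h.1 t' hw
    obtain ⟨m, hm, -⟩ :=
      hM.exists_partner_of_single ((acc_y_clauseWoman_iff f j j k t).2 ⟨rfl, hkt⟩) hsingle
    obtain ⟨k', rfl⟩ := eq_y_of_mem_clauseWoman hM hm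
    exact h.2 k' hm
  obtain ⟨c, hc, hfree⟩ := gadget_exists_free_z _ L hadj hfun hnc hstab
  refine ⟨c, by rwa [f.length_clauses], fun m hm => ?_⟩
  obtain ⟨k, rfl⟩ := eq_y_of_mem_clauseWoman hM (t := .inr c) hm
  exact hfree k hm

lemma p_q_mem_of_free (hM : (instOf f).IsSSNM M) {j k i s} (hzp : f.zToP j k i s)
    (hfree : ∀ m, (m, .z j k) ∉ M) : (.p i s, .q i s) ∈ M := by
  obtain ⟨w, hw⟩ := hM.exists_partner_of_single_woman
    (by simp [SMTI.Acc, instOf, hzp] : (instOf f).Acc (.p i s) (.z j k)) hfree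
  rcases acc_p (hM.1.1 _ hw) with rfl | ⟨j', k', rfl, -⟩
  · exact hw
  · exact absurd hw (p_clauseWoman_not_mem hM i s j' (.inr k'))

lemma exists_a_mem (hM : (instOf f).IsSSNM M) (i : Fin f.N) (s : Fin 2) :
    ∃ s' : Fin 4, s'.val / 2 = s.val ∧ (.a i s, .q i s') ∈ M := by
  by_contra! h
  have hsingle : ∀ w, (.a i s, w) ∉ M := fun w hw => by
    obtain ⟨s', rfl, hs'⟩ := acc_a (hM.1.1 _ hw)
    exact h s' hs' hw
  have hs : (2 * s.val) / 2 = s.val := by omega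
  obtain ⟨m, hm, hrk⟩ := hM.exists_partner_of_single (w := .q i ⟨2 * s.val, by omega⟩)
    (by simp [SMTI.Acc, instOf, hs]) hsingle
  rcases acc_q (hM.1.1 _ hm) with rfl | rfl
  · exact hsingle _ (by simpa [hs] using hm)
  · simp [instOf, SMTI.rk, hs] at hrk

lemma a_q_zero_mem_iff (hM : (instOf f).IsSSNM M) {i : Fin f.N} {s : Fin 4}
    (hp : (.p i s, .q i s) ∈ M) : (.a i 0, .q i 0) ∈ M ↔ s.val % 2 = 1 := by
  have hcross : ∀ {m m' w w'}, (m, w) ∈ M → (m', w') ∈ M →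
      Man5.key m < Man5.key m' → Woman5.key w' < Woman5.key w → False :=
    fun h h' hm hw => hM.2.1 _ h _ h' (.inl ⟨hm, hw⟩)
  obtain ⟨s0, hs0, h0⟩ := exists_a_mem hM i 0
  obtain ⟨s1, hs1, h1⟩ := exists_a_mem hM i 1
  obtain rfl | rfl : s0 = 0 ∨ s0 = 1 := by omega
  · -- `a_{i,1}` holds `q_{i,1}`, so only the positive `p`'s can hold their `q`'s.
    refine iff_of_true h0 ?_
    fin_cases s
    · exact absurd (hM.1.left_unique h0 hp) (by simp)
    · rfl
    · exact (hcross hp h0 (by simp [Man5.key]) (by simp [Woman5.key])).elim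
    · rfl
  · -- `a_{i,1}` holds `q_{i,2}`, hence `a_{i,2}` holds `q_{i,4}`, so only the negative `p`'s can.
    refine iff_of_false (fun h => absurd (hM.1.right_unique h0 h) (by simp)) ?_
    have h13 : (.a i 1, .q i 3) ∈ M := by
      obtain rfl | rfl : s1 = 2 ∨ s1 = 3 := by omega
      · exact (hcross h0 h1 (by simp [Man5.key]) (by simp [Woman5.key])).elim
      · exact h1
    fin_cases s
    · decide
    · exact absurd (hM.1.left_unique h0 hp) (by simp)
    · decide
    · exact absurd (hM.1.left_unique h13 hp) (by simp)

theorem satisfiable_of_isSSNM (hM : (instOf f).IsSSNM M) : f.Satisfiable := by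
  refine ⟨fun i => decide ((.a i 0, .q i 0) ∈ M), fun j => ?_⟩
  obtain ⟨k, hk, hfree⟩ := exists_free_z hM j
  set l := (f.clauses j)[k.val]
  have hzp : f.zToP j k l.1 (pslot l.2 (f.prevOcc l j k)) := ⟨l.2, by simp [l], rfl⟩
  refine ⟨l, List.getElem_mem hk, ?_⟩
  have hiff := a_q_zero_mem_iff hM (p_q_mem_of_free hM hzp hfree)
  rw [pslot_val_mod_two] at hiff
  change decide _ = _
  rw [Bool.eq_iff_iff, decide_eq_true_iff, hiff, Bool.toNat_eq_one]

end Necessity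

section Sufficiency

variable (f : CNF3)

/-- The matching built from an assignment `A` and the position `c j` of a true literal in each
clause: the `p`-men of true literals take their `q`, the `a`-men take the `q`'s of false literals,
and each clause gadget leaves only `z_{j, c j + 1}` free. -/
def mate (A : Fin f.N → Bool) (c : Fin (f.M2 + f.M3) → Fin 3) :
    Man5 f.N (f.M2 + f.M3) → Option (Woman5 f.N (f.M2 + f.M3))
  | .p i s => if s.val % 2 = (A i).toNat then some (.q i s) else none
  | .a i s => some (.q i ⟨2 * s.val + (1 - (A i).toNat), by omega⟩)
  | .sep => some .t
  | .y j k => (gadgetMate (f.isTwo j) (c j) k).map (clauseWoman j)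

variable {f} {A : Fin f.N → Bool} {c : Fin (f.M2 + f.M3) → Fin 3}

lemma mate_acc {m w} (h : mate f A c m = some w) :
    (instOf f).Acc m w ∧ (instOf f).mpref m w = some 0 := by
  cases m with
  | p i s =>
    simp only [mate] at h
    split_ifs at h
    cases h
    simp [SMTI.Acc, instOf]
  | a i s =>
    cases h
    have : (2 * s.val + (1 - (A i).toNat)) / 2 = s.val := by omega
    simp [SMTI.Acc, instOf, this]
  | sep =>
    cases h
    exact ⟨⟨rfl, rfl⟩, rfl⟩
  | y j k =>
    obtain ⟨t, ht, rfl⟩ := Option.map_eq_some_iff.1 h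
    have hpref := gadgetMate_pref _ _ _ _ ht
    exact ⟨(acc_y_clauseWoman_iff f j j k t).2 ⟨rfl, hpref⟩,
      by rw [mpref_y_clauseWoman, if_pos ⟨rfl, hpref⟩]⟩

lemma mate_key {m w} (h : mate f A c m = some w) :
    (∃ i : Fin f.N, 4 * i.val ≤ w.key ∧ w.key ≤ 4 * i.val + 3 ∧
      m.key = w.key + 2 * i.val + 2 * (A i).toNat) ∨
    (m = .sep ∧ w = .t) ∨
    ∃ j k t, m = .y j k ∧ w = clauseWoman j t ∧ gadgetMate (f.isTwo j) (c j) k = some t := by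
  cases m with
  | p i s =>
    simp only [mate] at h
    split_ifs at h with hA
    cases h
    refine .inl ⟨i, key_q_bounds i s |>.1, key_q_bounds i s |>.2, ?_⟩
    rw [key_p, hA]
  | a i s =>
    cases h
    have := Bool.toNat_le (A i)
    refine .inl ⟨i, key_q_bounds i _ |>.1, key_q_bounds i _ |>.2, ?_⟩
    rw [key_a i s (1 - (A i).toNat) (Nat.sub_le 1 _)]
    omega
  | sep =>
    cases h
    exact .inr (.inl ⟨rfl, rfl⟩)
  | y j k =>
    obtain ⟨t, ht, rfl⟩ := Option.map_eq_some_iff.1 h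
    exact .inr (.inr ⟨j, k, t, rfl, rfl, ht⟩)

lemma mate_lt {m m' w w'} (h : mate f A c m = some w) (h' : mate f A c m' = some w')
    (hlt : m < m') : w < w' := by
  change m.key < m'.key at hlt
  change w.key < w'.key
  rcases mate_key h with ⟨i, hw, hw', hm⟩ | ⟨rfl, rfl⟩ | ⟨j, k, t, rfl, rfl, ht⟩ <;>
    rcases mate_key h' with
      ⟨i', hv, hv', hm'⟩ | ⟨rfl, rfl⟩ | ⟨j', k', t', rfl, rfl, ht'⟩
  · rcases eq_or_ne i i' with rfl | hne
    · omega
    · have := Fin.val_ne_of_ne hne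
      have := Bool.toNat_le (A i')
      omega
  · rw [key_t]
    omega
  · rw [key_clauseWoman]
    omega
  · rw [key_sep] at hlt
    have := Bool.toNat_le (A i')
    omega
  · exact absurd hlt (lt_irrefl _)
  · rw [key_t, key_clauseWoman]
    omega
  · rw [key_y] at hlt
    have := Bool.toNat_le (A i')
    omega
  · rw [key_y, key_sep] at hlt
    omega
  · rw [key_y, key_y] at hlt
    rw [key_clauseWoman, key_clauseWoman]
    rcases eq_or_ne j j' with rfl | hne
    · have := gadgetMate_strictMono _ _ k k' t t' ht ht' (by omega)
      omega
    · have := Fin.val_ne_of_ne hne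
      have := gadgetPos_le t
      have := gadgetPos_le t'
      omega

lemma mate_injective {m m' w} (h : mate f A c m = some w) (h' : mate f A c m' = some w) :
    m = m' := by
  by_contra hne
  rcases Nat.lt_or_gt_of_ne (Man5.key_injective.ne hne) with hlt | hlt
  · exact lt_irrefl _ (mate_lt h h' hlt)
  · exact lt_irrefl _ (mate_lt h' h hlt)

lemma mate_free (hc : ∀ j, ∃ l, (f.clauses j)[(c j).val]? = some l ∧ A l.1 = l.2) {m w}
    (h : mate f A c m = none) (hacc : (instOf f).Acc m w) :
    ∃ m', mate f A c m' = some w ∧ (instOf f).wpref w m' = some 0 := by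
  cases m with
  | p i s =>
    simp only [mate, ite_eq_right_iff, reduceCtorEq, imp_false] at h
    rcases acc_p hacc with rfl | ⟨j, k, rfl, hzp⟩
    · -- `q_{i,s}` keeps `a_{i,⌈s/2⌉}`, who takes the `q` of every false literal.
      refine ⟨.a i ⟨s.val / 2, by omega⟩, ?_, by simp [instOf]⟩
      have := Bool.toNat_le (A i)
      have : 2 * (s.val / 2) + (1 - (A i).toNat) = s.val := by omega
      simp [mate, this]
    · -- the literal of `z_{j,k}` is false, so `z_{j,k}` is not the woman left free in clause `j`.
      obtain ⟨b, hk, hb⟩ := hzp.exists_getElem?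
      obtain ⟨l, hl, hAl⟩ := hc j
      have hkc : k ≠ c j := by
        rintro rfl
        rw [hk, Option.some_inj] at hl
        subst hl
        exact h (hAl ▸ hb)
      have hlen := f.length_clauses j
      have hklen := (List.getElem?_eq_some_iff.1 hk).1
      have hclen := (List.getElem?_eq_some_iff.1 hl).1
      obtain ⟨k', hk', hpref⟩ := gadgetMate_covers_z (f.isTwo j) (c j) k (by rwa [← hlen])
        (by rwa [← hlen]) hkc
      refine ⟨.y j k', by simp [mate, hk', clauseWoman], ?_⟩
      have := wpref_clauseWoman_y f j j k' (.inr k)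
      rwa [if_pos rfl, hpref] at this
  | a i s => cases h
  | sep => cases h
  | y j k =>
    obtain ⟨t, rfl, hpref⟩ := acc_y hacc
    obtain ⟨k', hk', hpref'⟩ := gadgetMate_free _ _ _ _ (Option.map_eq_none_iff.1 h) hpref
    exact ⟨.y j k', by simp [mate, hk'], by rw [wpref_clauseWoman_y, if_pos rfl, hpref']⟩

theorem exists_isSSNM_of_satisfiable (hf : f.Satisfiable) : ∃ M, (instOf f).IsSSNM M := by
  obtain ⟨A, hA⟩ := hf
  have : ∀ j, ∃ k : Fin 3, ∃ l, (f.clauses j)[k.val]? = some l ∧ A l.1 = l.2 := fun j => by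
    obtain ⟨l, hl, hAl⟩ := hA j
    obtain ⟨k, hk⟩ := f.exists_index_of_mem hl
    exact ⟨k, l, hk, hAl⟩
  choose c hc using this
  exact ⟨(Set.toFinite {x | mate f A c x.1 = some x.2}).toFinset,
    SMTI.isSSNM_of_mate (mate f A c) (fun m w => by simp) (fun _ _ => mate_acc)
      (fun _ _ _ => mate_injective) (fun _ _ _ _ => mate_lt) (fun _ _ => mate_free hc)⟩

end Sufficiency

end Reduction

/-- the SMTI instance `I(f)` admits a weak-SSNM iff `f` is satisfiable. -/
theorem stmt5 (f : CNF3) :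
    (∃ M, (instOf f).IsSSNM M) ↔ f.Satisfiable :=
  ⟨fun ⟨_, hM⟩ => Reduction.satisfiable_of_isSSNM hM,
    Reduction.exists_isSSNM_of_satisfiable⟩
end

section
/- Let I' be an SMI instance with men m_1, …, m_n and women w_1, …, w_n, and let I be its padded instance. Then: (i) every WSNM of I contains both (m_0, w_0) and (m_{n+1}, w_{n+1}); (ii) a matching M' is a WSNM of I' if and only if M' ∪ {(m_0, w_0), (m_{n+1}, w_{n+1})} is a WSNM of I; and consequently (iii) opt(I) = opt(I') + 2, where opt(J) denotes the maximum size of a WSNM of instance J. -/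
open scoped Classical

namespace SMTI

variable {Mty Wty : Type}

/-- `opt I`: the maximum cardinality of a WSNM of `I`. -/
noncomputable def opt [Preorder Mty] [Preorder Wty] (I : SMTI Mty Wty) : ℕ :=
  sSup {k | ∃ M, I.IsWSNM M ∧ M.card = k}

/-- `p` is the maximum pair of `M`:  it belongs to `M` and dominates every pair
of `M` in both coordinates. -/
def IsMaxPair [Preorder Mty] [Preorder Wty] (M : Finset (Mty × Wty)) (p : Mty × Wty) : Prop :=
  p ∈ M ∧ ∀ q ∈ M, q.1 ≤ p.1 ∧ q.2 ≤ p.2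

/-- `M` is a semi-WSNM with maximum pair `p`: a noncrossing matching whose maximum
pair is `p` and all of whose noncrossing blocking pairs lie (weakly) beyond `p` in
both coordinates. -/
def IsSemiWSNMWith [Preorder Mty] [Preorder Wty] (I : SMTI Mty Wty)
    (M : Finset (Mty × Wty)) (p : Mty × Wty) : Prop :=
  I.IsMatching M ∧ Noncrossing M ∧ IsMaxPair M p ∧
    ∀ m w, I.NCBlocks M m w → p.1 ≤ m ∧ p.2 ≤ w

/-- `M` is a semi-WSNM (with some maximum pair). -/
def IsSemiWSNM [Preorder Mty] [Preorder Wty] (I : SMTI Mty Wty)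
    (M : Finset (Mty × Wty)) : Prop :=
  ∃ p, I.IsSemiWSNMWith M p

/-- The padded instance: new man `m₀` and woman `w₀` on top, new man `m_{n+1}` and
woman `w_{n+1}` at the bottom; `m₀` and `w₀` list only each other, and so do
`m_{n+1}` and `w_{n+1}`; all other lists are as in the original instance
(original person `i`, `1 ≤ i ≤ n`, becomes index `i` of `Fin (n+2)`). -/
def padded {n : ℕ} (I : SMTI (Fin n) (Fin n)) : SMTI (Fin (n + 2)) (Fin (n + 2)) where
  mpref m w :=
    if hm : 0 < m.val ∧ m.val < n + 1 then
      if hw : 0 < w.val ∧ w.val < n + 1 then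
        I.mpref ⟨m.val - 1, by omega⟩ ⟨w.val - 1, by omega⟩
      else none
    else if (m.val = 0 ∧ w.val = 0) ∨ (m.val = n + 1 ∧ w.val = n + 1) then some 0
    else none
  wpref w m :=
    if hw : 0 < w.val ∧ w.val < n + 1 then
      if hm : 0 < m.val ∧ m.val < n + 1 then
        I.wpref ⟨w.val - 1, by omega⟩ ⟨m.val - 1, by omega⟩
      else none
    else if (m.val = 0 ∧ w.val = 0) ∨ (m.val = n + 1 ∧ w.val = n + 1) then some 0
    else none

/-- The embedding of a pair of the original instance into the padded instance. -/
def emb {n : ℕ} (p : Fin n × Fin n) : Fin (n + 2) × Fin (n + 2) :=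
  (⟨p.1.val + 1, by omega⟩, ⟨p.2.val + 1, by omega⟩)

/-- Pairs `p` and `q` (with `p.1 < q.1` and `p.2 < q.2`) are conflicting if the
matching `{p, q}` admits a blocking pair lying between them in both coordinates. -/
def Conflicting {nm nw : ℕ} (I : SMTI (Fin nm) (Fin nw)) (p q : Fin nm × Fin nw) : Prop :=
  ∃ s t, I.Blocks {p, q} s t ∧ p.1 ≤ s ∧ s ≤ q.1 ∧ p.2 ≤ t ∧ t ≤ q.2

/-- `X I i j`: the maximum size of a semi-WSNM of `I` with maximum pair `(m_i, w_j)`,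
or `⊥` (i.e. `−∞`) if none exists. -/
noncomputable def X {nm nw : ℕ} (I : SMTI (Fin nm) (Fin nw)) (i : Fin nm) (j : Fin nw) :
    WithBot ℕ :=
  if ∃ M, I.IsSemiWSNMWith M (i, j) then
    ((sSup {k | ∃ M, I.IsSemiWSNMWith M (i, j) ∧ M.card = k} : ℕ) : WithBot ℕ)
  else ⊥

end SMTI

/-!
The padding pairs `(m₀, w₀)` and `(m_{n+1}, w_{n+1})` are exclusive (each of their members finds
only the other acceptable) and, lying at the ends of both lines, cross no pair at all; so a WSNM
missing one of them would have it as a noncrossing blocking pair. Every other acceptable pair of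
the padded instance is a pair of `I'` shifted down by one place on both lines, and the shift
preserves preferences, membership and crossings. Hence the WSNMs of the padded instance are
exactly the padded WSNMs of `I'`, each larger by two, and `opt` grows by two as soon as `I'` has
a WSNM at all.

That a WSNM always exists is shown by an improvement procedure. Starting from `∅`, repeatedly
marry the noncrossing blocking pair `(s, t)` whose man `s` is topmost, `t` being his favourite
among such women. The invariant is that every noncrossing blocking pair `(a, b)` points upward:
`b` lies above the partner of `a`, and `a` below the partner of `b`. Since the old partner of
`s` therefore lies below `t`, the step improves `t` and leaves every woman above her untouched,
so the partner ranks of the women, read from top to bottom, decrease lexicographically.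
-/

namespace SMTI

lemma crossing_comm {Mty Wty : Type} [Preorder Mty] [Preorder Wty] {p q : Mty × Wty} :
    Crossing p q ↔ Crossing q p := or_comm

section Existence

variable {Mty Wty : Type} [LinearOrder Mty] [LinearOrder Wty] {I : SMTI Mty Wty}
  {M : Finset (Mty × Wty)} {s a x : Mty} {t b y : Wty}

def UpwardIn (M : Finset (Mty × Wty)) (a : Mty) (b : Wty) : Prop :=
  (∀ w, (a, w) ∈ M → b < w) ∧ ∀ m, (m, b) ∈ M → m < a

lemma upwardIn_of_mem (hM : I.IsMatching M) (hnc : Noncrossing M) (hxy : (x, y) ∈ M)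
    (hxa : x ≤ a) (hby : b ≤ y) (hne : (x, y) ≠ (a, b)) : UpwardIn M a b := by
  constructor <;> intro z hz <;> have hcr := hnc _ hz _ hxy <;> have huniq := hM.2 _ hz _ hxy <;>
    simp only [Crossing, Prod.mk.injEq] at hcr huniq hne <;> grind

def marry (M : Finset (Mty × Wty)) (m : Mty) (w : Wty) : Finset (Mty × Wty) :=
  insert (m, w) (M.filter fun p => p.1 ≠ m ∧ p.2 ≠ w)

lemma mem_marry {p : Mty × Wty} :
    p ∈ marry M s t ↔ p = (s, t) ∨ p ∈ M ∧ p.1 ≠ s ∧ p.2 ≠ t := by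
  simp [marry]

lemma mem_marry_self : (s, t) ∈ marry M s t := Finset.mem_insert_self _ _

lemma isMatching_marry (hM : I.IsMatching M) (hst : I.Acc s t) : I.IsMatching (marry M s t) := by
  refine ⟨fun p hp => ?_, fun p hp q hq hpq => ?_⟩
  · rcases mem_marry.1 hp with rfl | ⟨hp, -⟩
    exacts [hst, hM.1 p hp]
  · rcases mem_marry.1 hp with rfl | ⟨hp, hp1, hp2⟩ <;>
      rcases mem_marry.1 hq with rfl | ⟨hq, hq1, hq2⟩
    · rfl
    · grind
    · grind
    · exact hM.2 p hp q hq hpq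

lemma noncrossing_marry (hnc : Noncrossing M) (hst : ∀ q ∈ M, ¬ Crossing (s, t) q) :
    Noncrossing (marry M s t) := by
  intro p hp q hq
  rcases mem_marry.1 hp with rfl | ⟨hp, -⟩ <;> rcases mem_marry.1 hq with rfl | ⟨hq, -⟩
  · simp [Crossing]
  · exact hst q hq
  · exact fun h => hst p hp (crossing_comm.1 h)
  · exact hnc p hp q hq

lemma UpwardIn.marry (h : UpwardIn M a b) (has : a ≠ s) (hbt : b ≠ t) :
    UpwardIn (marry M s t) a b :=
  ⟨fun w hw => h.1 w (by grind [mem_marry]), fun m hm => h.2 m (by grind [mem_marry])⟩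

lemma NCBlocks.of_marry (h : I.NCBlocks (marry M s t) a b)
    (hab : (a, b) ∉ M)
    (hw : ∀ w, (a, w) ∈ M → (a = s ∨ w = t) → rk (I.mpref a b) < rk (I.mpref a w))
    (hm : ∀ m, (m, b) ∈ M → (m = s ∨ b = t) → rk (I.wpref b a) < rk (I.wpref b m))
    (hcr : ∀ q ∈ M, (q.1 = s ∨ q.2 = t) → ¬ Crossing (a, b) q) : I.NCBlocks M a b := by
  obtain ⟨⟨hacc, -, hw', hm'⟩, hcr'⟩ := h
  refine ⟨⟨hacc, hab, fun w haw => ?_, fun m hmb => ?_⟩, fun q hq => ?_⟩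
  · by_cases hor : a = s ∨ w = t
    · exact hw w haw hor
    · exact hw' w (mem_marry.2 (Or.inr ⟨haw, by tauto⟩))
  · by_cases hor : m = s ∨ b = t
    · exact hm m hmb hor
    · exact hm' m (mem_marry.2 (Or.inr ⟨hmb, by tauto⟩))
  · by_cases hor : q.1 = s ∨ q.2 = t
    · exact hcr q hq hor
    · exact hcr' q (mem_marry.2 (Or.inr ⟨hq, by tauto⟩))

def NCBlocksUpward (I : SMTI Mty Wty) (M : Finset (Mty × Wty)) : Prop :=
  ∀ a b, I.NCBlocks M a b → UpwardIn M a b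

lemma upwardIn_marry_self (hM : I.IsMatching M) (hnc : Noncrossing M) (hst : I.NCBlocks M s t)
    (hup : UpwardIn M s t) (ht : ∀ b, I.NCBlocks M s b → rk (I.mpref s t) ≤ rk (I.mpref s b))
    (hsb : I.NCBlocks (marry M s t) s b) : UpwardIn (marry M s t) s b := by
  have hbt : b < t := by
    by_contra! htb
    have hpref : rk (I.mpref s b) < rk (I.mpref s t) := hsb.1.2.2.1 t mem_marry_self
    have hsbM : (s, b) ∉ M := fun h => (hst.1.2.2.1 b h).not_gt hpref
    have htb' : t < b := htb.lt_of_ne (by rintro rfl; exact hsb.1.2.1 mem_marry_self)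
    refine (ht b (hsb.of_marry hsbM ?_ ?_ ?_)).not_gt hpref
    · exact fun w hw _ => hpref.trans (hst.1.2.2.1 w hw)
    · rintro m hm (rfl | rfl)
      exacts [absurd hm hsbM, absurd htb' (lt_irrefl _)]
    · rintro ⟨m, w⟩ hq (rfl | rfl)
      · simp [Crossing]
      · have := hup.2 m hq
        simp only [Crossing]
        grind
  exact upwardIn_of_mem (isMatching_marry hM hst.1.1) (noncrossing_marry hnc hst.2)
    mem_marry_self le_rfl hbt.le (by simp [hbt.ne'])

lemma upwardIn_marry_of_snd_eq (hM : I.IsMatching M) (hnc : Noncrossing M)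
    (hst : I.NCBlocks M s t) (hup : UpwardIn M s t) (hs : ∀ a b, I.NCBlocks M a b → s ≤ a)
    (hat : I.NCBlocks (marry M s t) a t) (has : a ≠ s) : UpwardIn (marry M s t) a t := by
  have hsa : s < a := by
    by_contra! has'
    have hpref : rk (I.wpref t a) < rk (I.wpref t s) := hat.1.2.2.2 s mem_marry_self
    have hatM : (a, t) ∉ M := fun h => (hst.1.2.2.2 a h).not_gt hpref
    refine (hs a t (hat.of_marry hatM ?_ ?_ ?_)).not_gt (has'.lt_of_ne has)
    · rintro w hw (rfl | rfl)
      exacts [absurd rfl has, absurd hw hatM]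
    · exact fun m hm _ => hpref.trans (hst.1.2.2.2 m hm)
    · rintro ⟨m, w⟩ hq (rfl | rfl)
      · have := hup.1 w hq
        simp only [Crossing]
        grind
      · simp [Crossing]
  exact upwardIn_of_mem (isMatching_marry hM hst.1.1) (noncrossing_marry hnc hst.2)
    mem_marry_self hsa.le le_rfl (by simp [hsa.ne])

lemma upwardIn_marry_of_ne (hM : I.IsMatching M) (hnc : Noncrossing M)
    (hinv : NCBlocksUpward I M) (hup : UpwardIn M s t)
    (hab : I.NCBlocks (marry M s t) a b) (has : a ≠ s) (hbt : b ≠ t) :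
    UpwardIn (marry M s t) a b := by
  refine UpwardIn.marry ?_ has hbt
  have habM : (a, b) ∉ M := fun h => hab.1.2.1 (mem_marry.2 (Or.inr ⟨h, has, hbt⟩))
  have hside : (a < s ∧ b < t) ∨ (s < a ∧ t < b) := by
    have := hab.2 _ mem_marry_self
    simp only [Crossing] at this
    grind
  rcases hside with ⟨has', hbt'⟩ | ⟨hsa, htb⟩
  · by_cases hx : ∃ x ≤ a, (x, t) ∈ M
    · obtain ⟨x, hxa, hxt⟩ := hx
      exact upwardIn_of_mem hM hnc hxt hxa hbt'.le (by simp [hbt.symm])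
    push Not at hx
    refine hinv a b (hab.of_marry habM ?_ ?_ ?_)
    · rintro w hw (rfl | rfl)
      exacts [absurd rfl has, absurd hw (hx a le_rfl)]
    · rintro m hm (rfl | rfl)
      exacts [absurd (hup.1 b hm) hbt'.not_gt, absurd rfl hbt]
    · rintro ⟨m, w⟩ hq (rfl | rfl)
      · have := hup.1 w hq
        simp only [Crossing]
        grind
      · have := hx m
        simp only [Crossing]
        grind
  · by_cases hy : ∃ y ≥ b, (s, y) ∈ M
    · obtain ⟨y, hby, hsy⟩ := hy
      exact upwardIn_of_mem hM hnc hsy hsa.le hby (by simp [has.symm])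
    push Not at hy
    refine hinv a b (hab.of_marry habM ?_ ?_ ?_)
    · rintro w hw (rfl | rfl)
      exacts [absurd rfl has, absurd (hup.2 a hw) hsa.not_gt]
    · rintro m hm (rfl | rfl)
      exacts [absurd hm (hy b le_rfl), absurd rfl hbt]
    · rintro ⟨m, w⟩ hq (rfl | rfl)
      · have := hy w
        simp only [Crossing]
        grind
      · have := hup.2 m hq
        simp only [Crossing]
        grind

lemma ncBlocksUpward_marry (hM : I.IsMatching M) (hnc : Noncrossing M)
    (hinv : NCBlocksUpward I M) (hst : I.NCBlocks M s t) (hs : ∀ a b, I.NCBlocks M a b → s ≤ a)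
    (ht : ∀ b, I.NCBlocks M s b → rk (I.mpref s t) ≤ rk (I.mpref s b)) :
    NCBlocksUpward I (marry M s t) := by
  intro a b hab
  have hup := hinv s t hst
  by_cases has : a = s
  · subst has
    exact upwardIn_marry_self hM hnc hst hup ht hab
  by_cases hbt : b = t
  · subst hbt
    exact upwardIn_marry_of_snd_eq hM hnc hst hup hs hab has
  exact upwardIn_marry_of_ne hM hnc hinv hup hab has hbt

noncomputable def partnerRank (I : SMTI Mty Wty) (M : Finset (Mty × Wty)) (w : Wty) : ℕ∞ :=
  (M.filter (·.2 = w)).inf fun p => rk (I.wpref w p.1)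

lemma partnerRank_marry_self_lt (hst : I.Blocks M s t) :
    partnerRank I (marry M s t) t < partnerRank I M t := by
  have hfilter : (marry M s t).filter (·.2 = t) = {(s, t)} := by
    ext p
    simp only [Finset.mem_filter, mem_marry, Finset.mem_singleton]
    grind
  have hacc : rk (I.wpref t s) < ⊤ := by
    obtain ⟨r, hr⟩ := Option.isSome_iff_exists.1 hst.1.2
    simp [rk, hr]
  rw [partnerRank, hfilter, Finset.inf_singleton, partnerRank, Finset.lt_inf_iff hacc]
  intro p hp
  rw [Finset.mem_filter] at hp
  exact hst.2.2.2 p.1 (hp.2 ▸ hp.1)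

lemma partnerRank_marry_of_lt (hup : UpwardIn M s t) {w : Wty} (hwt : w < t) :
    partnerRank I (marry M s t) w = partnerRank I M w := by
  have hfilter : (marry M s t).filter (·.2 = w) = M.filter (·.2 = w) := by
    ext ⟨m, w'⟩
    simp only [Finset.mem_filter, mem_marry, Prod.mk.injEq]
    have := hup.1 w
    grind
  rw [partnerRank, hfilter, partnerRank]

lemma toLex_partnerRank_marry_lt (hst : I.Blocks M s t) (hup : UpwardIn M s t) :
    toLex (partnerRank I (marry M s t)) < toLex (partnerRank I M) :=
  ⟨t, fun _ hwt => partnerRank_marry_of_lt hup hwt, partnerRank_marry_self_lt hst⟩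

lemma exists_leading_ncBlocks [Finite Mty] (h : ∃ m w, I.NCBlocks M m w) :
    ∃ s t, I.NCBlocks M s t ∧ (∀ a b, I.NCBlocks M a b → s ≤ a) ∧
      ∀ b, I.NCBlocks M s b → rk (I.mpref s t) ≤ rk (I.mpref s b) := by
  obtain ⟨s, ⟨t₀, hst₀⟩, hs⟩ := wellFounded_lt.has_min {a | ∃ b, I.NCBlocks M a b} h
  obtain ⟨t, hst, ht⟩ :=
    (InvImage.wf (fun b => rk (I.mpref s b)) wellFounded_lt).has_min {b | I.NCBlocks M s b}
      ⟨t₀, hst₀⟩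
  exact ⟨s, t, hst, fun a b hab => not_lt.1 (hs a ⟨b, hab⟩), fun b hb => not_lt.1 (ht b hb)⟩

theorem exists_isWSNM [Finite Mty] [Finite Wty] (I : SMTI Mty Wty) : ∃ M, I.IsWSNM M := by
  obtain ⟨M, ⟨hM, hnc, hinv⟩, hmin⟩ :=
    (InvImage.wf (fun M => toLex (partnerRank I M)) wellFounded_lt).has_min
      {M | I.IsMatching M ∧ Noncrossing M ∧ NCBlocksUpward I M}
      ⟨∅, by simp [IsMatching, Noncrossing, NCBlocksUpward, UpwardIn]⟩
  refine ⟨M, hM, hnc, fun m w hmw => ?_⟩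
  obtain ⟨s, t, hst, hs, ht⟩ := exists_leading_ncBlocks ⟨m, w, hmw⟩
  exact hmin (marry M s t)
    ⟨isMatching_marry hM hst.1.1, noncrossing_marry hnc hst.2,
      ncBlocksUpward_marry hM hnc hinv hst hs ht⟩
    (toLex_partnerRank_marry_lt hst.1 (hinv s t hst))

end Existence

section Optimum

variable {Mty Wty : Type} [Finite Mty] [Finite Wty]

lemma bddAbove_card_isWSNM [Preorder Mty] [Preorder Wty] (I : SMTI Mty Wty) :
    BddAbove {k | ∃ M, I.IsWSNM M ∧ M.card = k} := by
  have := Fintype.ofFinite (Mty × Wty)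
  exact ⟨Fintype.card (Mty × Wty), by rintro _ ⟨M, -, rfl⟩; exact M.card_le_univ⟩

lemma card_le_opt [Preorder Mty] [Preorder Wty] {I : SMTI Mty Wty} {M : Finset (Mty × Wty)}
    (hM : I.IsWSNM M) : M.card ≤ I.opt :=
  le_csSup (bddAbove_card_isWSNM I) ⟨M, hM, rfl⟩

lemma exists_isWSNM_card_eq_opt [LinearOrder Mty] [LinearOrder Wty] (I : SMTI Mty Wty) :
    ∃ M, I.IsWSNM M ∧ M.card = I.opt := by
  obtain ⟨M, hM⟩ := exists_isWSNM I
  exact Nat.sSup_mem (s := {k | ∃ M, I.IsWSNM M ∧ M.card = k}) ⟨M.card, M, hM, rfl⟩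
    (bddAbove_card_isWSNM I)

end Optimum

section Corners

variable {Mty Wty : Type} [Preorder Mty] [Preorder Wty] {m : Mty} {w : Wty}

lemma not_crossing_of_isMin (hm : IsMin m) (hw : IsMin w) (q : Mty × Wty) :
    ¬ Crossing (m, w) q := by
  rintro (⟨-, h⟩ | ⟨h, -⟩)
  exacts [hw.not_lt h, hm.not_lt h]

lemma not_crossing_of_isMax (hm : IsMax m) (hw : IsMax w) (q : Mty × Wty) :
    ¬ Crossing (m, w) q := by
  rintro (⟨h, -⟩ | ⟨-, h⟩)
  exacts [hm.not_lt h, hw.not_lt h]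

lemma mem_of_isWSNM_of_exclusive {I : SMTI Mty Wty} {M : Finset (Mty × Wty)} (hM : I.IsWSNM M)
    (hacc : I.Acc m w) (hm : ∀ w', I.Acc m w' → w' = w) (hw : ∀ m', I.Acc m' w → m' = m)
    (hcr : ∀ q, ¬ Crossing (m, w) q) : (m, w) ∈ M := by
  by_contra hmw
  refine hM.2.2 m w ⟨⟨hacc, hmw, fun w' hw' => ?_, fun m' hm' => ?_⟩, fun q _ => hcr q⟩
  · exact absurd (hm w' (hM.1.1 _ hw') ▸ hw') hmw
  · exact absurd (hw m' (hM.1.1 _ hm') ▸ hm') hmw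

end Corners

section Padding

variable {n : ℕ} {I' : SMTI (Fin n) (Fin n)}

lemma emb_eq (p : Fin n × Fin n) : emb p = (p.1.castSucc.succ, p.2.castSucc.succ) := rfl

lemma zero_ne_castSucc_succ (i : Fin n) : (0 : Fin (n + 2)) ≠ i.castSucc.succ :=
  (Fin.succ_ne_zero _).symm

lemma last_ne_castSucc_succ (i : Fin n) : Fin.last (n + 1) ≠ i.castSucc.succ := by
  simp [Fin.ext_iff, i.isLt.ne']

lemma castSucc_succ_lt_last (i : Fin n) : i.castSucc.succ < Fin.last (n + 1) := by
  simp [Fin.lt_def]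

lemma emb_injective : Function.Injective (emb (n := n)) := by
  intro p q h
  simpa [emb_eq, Prod.ext_iff] using h

@[simp] lemma padded_mpref_castSucc_succ (i j : Fin n) :
    (padded I').mpref i.castSucc.succ j.castSucc.succ = I'.mpref i j := by
  simp [padded]

@[simp] lemma padded_wpref_castSucc_succ (i j : Fin n) :
    (padded I').wpref j.castSucc.succ i.castSucc.succ = I'.wpref j i := by
  simp [padded]

@[simp] lemma padded_acc_castSucc_succ {i j : Fin n} :
    (padded I').Acc i.castSucc.succ j.castSucc.succ ↔ I'.Acc i j := by
  simp [Acc]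

@[simp] lemma padded_acc_zero_zero : (padded I').Acc 0 0 := by
  simp [Acc, padded]

@[simp] lemma padded_acc_last_last : (padded I').Acc (Fin.last (n + 1)) (Fin.last (n + 1)) := by
  simp [Acc, padded]

lemma eq_zero_or_eq_last_or_castSucc_succ (x : Fin (n + 2)) :
    x = 0 ∨ x = Fin.last (n + 1) ∨ ∃ i : Fin n, i.castSucc.succ = x := by
  obtain ⟨v, hv⟩ := x
  rcases Nat.eq_zero_or_pos v with rfl | hv0
  · exact Or.inl rfl
  by_cases hvn : v = n + 1
  · exact Or.inr (Or.inl (Fin.ext hvn))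
  exact Or.inr (Or.inr ⟨⟨v - 1, by omega⟩, Fin.ext (by simp; omega)⟩)

lemma padded_acc_cases {m w : Fin (n + 2)} (h : (padded I').Acc m w) :
    (m = 0 ∧ w = 0) ∨ (m = Fin.last (n + 1) ∧ w = Fin.last (n + 1)) ∨
      ∃ i j : Fin n, i.castSucc.succ = m ∧ j.castSucc.succ = w := by
  have hne : ∀ i : Fin n, (i : ℕ) ≠ n := fun i => i.isLt.ne
  rcases eq_zero_or_eq_last_or_castSucc_succ m with rfl | rfl | ⟨i, rfl⟩ <;>
    rcases eq_zero_or_eq_last_or_castSucc_succ w with rfl | rfl | ⟨j, rfl⟩ <;>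
    simp_all [Acc, padded]

lemma padded_acc_eq_zero_iff {m w : Fin (n + 2)} (h : (padded I').Acc m w) : m = 0 ↔ w = 0 := by
  rcases padded_acc_cases h with ⟨rfl, rfl⟩ | ⟨rfl, rfl⟩ | ⟨i, j, rfl, rfl⟩ <;> simp

lemma padded_acc_eq_last_iff {m w : Fin (n + 2)} (h : (padded I').Acc m w) :
    m = Fin.last (n + 1) ↔ w = Fin.last (n + 1) := by
  rcases padded_acc_cases h with ⟨rfl, rfl⟩ | ⟨rfl, rfl⟩ | ⟨i, j, rfl, rfl⟩ <;> simp

lemma zero_zero_mem_of_isWSNM {M : Finset (Fin (n + 2) × Fin (n + 2))}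
    (hM : (padded I').IsWSNM M) : (0, 0) ∈ M :=
  mem_of_isWSNM_of_exclusive hM (by simp)
    (fun _ h => (padded_acc_eq_zero_iff h).1 rfl) (fun _ h => (padded_acc_eq_zero_iff h).2 rfl)
    (not_crossing_of_isMin (fun _ _ => Fin.zero_le _) (fun _ _ => Fin.zero_le _))

lemma last_last_mem_of_isWSNM {M : Finset (Fin (n + 2) × Fin (n + 2))}
    (hM : (padded I').IsWSNM M) : (Fin.last (n + 1), Fin.last (n + 1)) ∈ M :=
  mem_of_isWSNM_of_exclusive hM (by simp)
    (fun _ h => (padded_acc_eq_last_iff h).1 rfl) (fun _ h => (padded_acc_eq_last_iff h).2 rfl)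
    (not_crossing_of_isMax (fun _ _ => Fin.le_last _) (fun _ _ => Fin.le_last _))

def padMatching (M' : Finset (Fin n × Fin n)) : Finset (Fin (n + 2) × Fin (n + 2)) :=
  insert (0, 0) (insert (Fin.last (n + 1), Fin.last (n + 1)) (M'.image emb))

variable {M' : Finset (Fin n × Fin n)}

lemma isMatching_padMatching_iff : (padded I').IsMatching (padMatching M') ↔ I'.IsMatching M' := by
  simp only [IsMatching, padMatching, Finset.forall_mem_insert, Finset.forall_mem_image]
  simp [emb_eq, Prod.ext_iff, zero_ne_castSucc_succ, last_ne_castSucc_succ]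

lemma noncrossing_padMatching_iff : Noncrossing (padMatching M') ↔ Noncrossing M' := by
  simp only [Noncrossing, padMatching, Finset.forall_mem_insert, Finset.forall_mem_image]
  simp [emb_eq, Crossing, castSucc_succ_lt_last, Fin.le_last]

lemma ncBlocks_padMatching_iff {i j : Fin n} :
    (padded I').NCBlocks (padMatching M') i.castSucc.succ j.castSucc.succ ↔ I'.NCBlocks M' i j := by
  simp only [NCBlocks, Blocks, padMatching, Finset.forall_mem_insert, Finset.forall_mem_image]
  simp [emb_eq, Crossing, castSucc_succ_lt_last, Fin.le_last]

lemma isWSNM_padMatching_iff : (padded I').IsWSNM (padMatching M') ↔ I'.IsWSNM M' := by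
  rw [IsWSNM, IsWSNM, isMatching_padMatching_iff, noncrossing_padMatching_iff]
  refine and_congr_right fun _ => and_congr_right fun _ =>
    ⟨fun h i j hij => h _ _ (ncBlocks_padMatching_iff.2 hij), fun h m w hmw => ?_⟩
  rcases padded_acc_cases hmw.1.1 with ⟨rfl, rfl⟩ | ⟨rfl, rfl⟩ | ⟨i, j, rfl, rfl⟩
  · exact hmw.1.2.1 (by simp [padMatching])
  · exact hmw.1.2.1 (by simp [padMatching])
  · exact h i j (ncBlocks_padMatching_iff.1 hmw)

lemma exists_eq_padMatching_of_isWSNM {M : Finset (Fin (n + 2) × Fin (n + 2))}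
    (hM : (padded I').IsWSNM M) : ∃ M', M = padMatching M' := by
  refine ⟨M.preimage emb emb_injective.injOn, ?_⟩
  ext ⟨m, w⟩
  simp only [padMatching, Finset.mem_insert, Finset.mem_image, Finset.mem_preimage, Prod.mk.injEq]
  constructor
  · intro h
    rcases padded_acc_cases (hM.1.1 _ h) with ⟨rfl, rfl⟩ | ⟨rfl, rfl⟩ | ⟨i, j, rfl, rfl⟩
    exacts [Or.inl ⟨rfl, rfl⟩, Or.inr (Or.inl ⟨rfl, rfl⟩), Or.inr (Or.inr ⟨(i, j), h, rfl⟩)]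
  · rintro (⟨rfl, rfl⟩ | ⟨rfl, rfl⟩ | ⟨q, hq, hqe⟩)
    exacts [zero_zero_mem_of_isWSNM hM, last_last_mem_of_isWSNM hM, hqe ▸ hq]

lemma card_padMatching : (padMatching M').card = M'.card + 2 := by
  rw [padMatching, Finset.card_insert_of_notMem, Finset.card_insert_of_notMem,
    Finset.card_image_of_injective _ emb_injective] <;> simp [emb_eq]

lemma opt_padded (I' : SMTI (Fin n) (Fin n)) : (padded I').opt = I'.opt + 2 := by
  apply le_antisymm
  · obtain ⟨M, hM, hcard⟩ := exists_isWSNM_card_eq_opt (padded I')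
    obtain ⟨M', rfl⟩ := exists_eq_padMatching_of_isWSNM hM
    rw [← hcard, card_padMatching]
    exact Nat.add_le_add_right (card_le_opt (isWSNM_padMatching_iff.1 hM)) 2
  · obtain ⟨M', hM', hcard⟩ := exists_isWSNM_card_eq_opt I'
    rw [← hcard, ← card_padMatching]
    exact card_le_opt (isWSNM_padMatching_iff.2 hM')

end Padding

end SMTI

theorem stmt9_general {n : ℕ} (I' : SMTI (Fin n) (Fin n)) :
    (∀ M, (SMTI.padded I').IsWSNM M →
      ((0 : Fin (n + 2)), (0 : Fin (n + 2))) ∈ M ∧ (Fin.last (n + 1), Fin.last (n + 1)) ∈ M) ∧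
    (∀ M' : Finset (Fin n × Fin n),
      I'.IsWSNM M' ↔
        (SMTI.padded I').IsWSNM
          (insert ((0 : Fin (n + 2)), (0 : Fin (n + 2)))
            (insert (Fin.last (n + 1), Fin.last (n + 1)) (M'.image SMTI.emb)))) ∧
    (SMTI.padded I').opt = I'.opt + 2 :=
  ⟨fun _ hM => ⟨SMTI.zero_zero_mem_of_isWSNM hM, SMTI.last_last_mem_of_isWSNM hM⟩,
    fun _ => SMTI.isWSNM_padMatching_iff.symm, SMTI.opt_padded I'⟩

/-- padding an SMI instance `I'` to `I`:
(i) every WSNM of `I` contains `(m₀, w₀)` and `(m_{n+1}, w_{n+1})`;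
(ii) `M'` is a WSNM of `I'` iff `M' ∪ {(m₀, w₀), (m_{n+1}, w_{n+1})}` is a WSNM of `I`;
(iii) `opt I = opt I' + 2`. -/
theorem stmt9 {n : ℕ} (I' : SMTI (Fin n) (Fin n)) (hI' : I'.NoTies) :
    (∀ M, (SMTI.padded I').IsWSNM M →
      ((0 : Fin (n + 2)), (0 : Fin (n + 2))) ∈ M ∧ (Fin.last (n + 1), Fin.last (n + 1)) ∈ M) ∧
    (∀ M' : Finset (Fin n × Fin n),
      I'.IsWSNM M' ↔
        (SMTI.padded I').IsWSNM
          (insert ((0 : Fin (n + 2)), (0 : Fin (n + 2)))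
            (insert (Fin.last (n + 1), Fin.last (n + 1)) (M'.image SMTI.emb)))) ∧
    (SMTI.padded I').opt = I'.opt + 2 :=
  stmt9_general I'
end
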